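/- arXiv:math/0104002 — 7 statements merged into one kernel-verified Lean document; each statement's English description precedes it below -/
import Mathlib

section
/- Let A, B, C, p, q, r, λ, μ, α ∈ ℂ. In ℂ[u,v], the ideal (v − (A·u² + B·u + C), u³ + p·u² + q·u + r) is contained in the ideal (v − λ·u − μ, (u − α)²) if and only if B = λ − 2Aα, C = μ + Aα², q = −3α² − 2pα, and r = −α³ − pα² − qα. -/
/-!
The ideal `(v - λu - μ, (u - α)²)` is the scheme of length two at `(α, λα + μ)` with tangent
direction `(1, λ)`, so it lies in the kernel of evaluation at the point `u = α + ε`,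
`v = λα + μ + λε` over the dual numbers. The two generators of the big ideal evaluate there to
their value and derivative along that tangent, and the vanishing of these is the coefficient
condition. Conversely, under that condition both generators are explicit combinations of
`v - λu - μ` and `(u - α)²`.
-/

open MvPolynomial DualNumber TrivSqZeroExt

section

variable {R : Type*} [CommRing R]

noncomputable def tangentEval (lam mu al : R) : MvPolynomial (Fin 2) R →ₐ[R] DualNumber R :=
  aeval ![inl al + ε, inl (lam * al + mu) + inl lam * ε]

@[simp]
lemma tangentEval_X_zero (lam mu al : R) : tangentEval lam mu al (X 0) = inl al + ε := by
  simp [tangentEval]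

@[simp]
lemma tangentEval_X_one (lam mu al : R) :
    tangentEval lam mu al (X 1) = inl (lam * al + mu) + inl lam * ε := by
  simp [tangentEval]

lemma inl_add_inl_mul_eps_eq_zero_iff (a b : R) :
    (inl a + inl b * ε : DualNumber R) = 0 ↔ a = 0 ∧ b = 0 := by
  simp [TrivSqZeroExt.ext_iff]

lemma span_le_ker_tangentEval (lam mu al : R) :
    Ideal.span {(X 1 : MvPolynomial (Fin 2) R) - (C lam * X 0 + C mu), (X 0 - C al) ^ 2}
      ≤ RingHom.ker (tangentEval lam mu al) := by
  refine Ideal.span_le.2 (Set.pair_subset ?_ ?_) <;>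
  · ext <;> simp [algebraMap_eq_inl']

lemma tangentEval_sub_quadratic (lam mu al A B C' : R) :
    tangentEval lam mu al ((X 1 : MvPolynomial (Fin 2) R) - (C A * X 0 ^ 2 + C B * X 0 + C C'))
      = inl (lam * al + mu - (A * al ^ 2 + B * al + C')) + inl (lam - 2 * A * al - B) * ε := by
  ext
  · simp [algebraMap_eq_inl']
  · simp [algebraMap_eq_inl']; ring

lemma tangentEval_cubic (lam mu al p q r : R) :
    tangentEval lam mu al (X 0 ^ 3 + C p * X 0 ^ 2 + C q * X 0 + C r : MvPolynomial (Fin 2) R)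
      = inl (al ^ 3 + p * al ^ 2 + q * al + r) + inl (3 * al ^ 2 + 2 * p * al + q) * ε := by
  ext
  · simp [algebraMap_eq_inl']
  · simp [algebraMap_eq_inl']; ring

lemma sub_quadratic_mem_span {lam mu al A B C' : R} (hB : B = lam - 2 * A * al)
    (hC : C' = mu + A * al ^ 2) :
    (X 1 : MvPolynomial (Fin 2) R) - (C A * X 0 ^ 2 + C B * X 0 + C C')
      ∈ Ideal.span {X 1 - (C lam * X 0 + C mu), (X 0 - C al) ^ 2} := by
  rw [Ideal.mem_span_pair]
  refine ⟨1, -C A, ?_⟩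
  simp only [hB, hC, map_sub, map_add, map_mul, map_pow, map_ofNat]
  ring

lemma cubic_mem_span {lam mu al p q r : R} (hq : q = -3 * al ^ 2 - 2 * p * al)
    (hr : r = -al ^ 3 - p * al ^ 2 - q * al) :
    (X 0 ^ 3 + C p * X 0 ^ 2 + C q * X 0 + C r : MvPolynomial (Fin 2) R)
      ∈ Ideal.span {X 1 - (C lam * X 0 + C mu), (X 0 - C al) ^ 2} := by
  rw [Ideal.mem_span_pair]
  refine ⟨0, X 0 + C (2 * al + p), ?_⟩
  simp only [hr, hq, map_sub, map_add, map_mul, map_pow, map_neg, map_ofNat]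
  ring

end

/-- In `ℂ[u,v]` (with `u = X 0`, `v = X 1`), the ideal
`(v − (A·u² + B·u + C), u³ + p·u² + q·u + r)` is contained in the ideal
`(v − λ·u − μ, (u − α)²)` if and only if `B = λ − 2Aα`, `C = μ + Aα²`,
`q = −3α² − 2pα`, and `r = −α³ − pα² − qα`. -/
theorem ideal_span_le_iff_coeffs (A B C' p q r lam mu al : ℂ) :
    Ideal.span
        {(X 1 : MvPolynomial (Fin 2) ℂ) -
            (MvPolynomial.C A * X 0 ^ 2 + MvPolynomial.C B * X 0 + MvPolynomial.C C'),
          X 0 ^ 3 + MvPolynomial.C p * X 0 ^ 2 + MvPolynomial.C q * X 0 + MvPolynomial.C r}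
      ≤ Ideal.span
          {(X 1 : MvPolynomial (Fin 2) ℂ) - (MvPolynomial.C lam * X 0 + MvPolynomial.C mu),
            (X 0 - MvPolynomial.C al) ^ 2}
    ↔ (B = lam - 2 * A * al ∧ C' = mu + A * al ^ 2 ∧
        q = -3 * al ^ 2 - 2 * p * al ∧ r = -al ^ 3 - p * al ^ 2 - q * al) := by
  constructor
  · intro h
    have hker := h.trans (span_le_ker_tangentEval lam mu al)
    obtain ⟨hval₁, hder₁⟩ := (inl_add_inl_mul_eps_eq_zero_iff _ _).1 <|
      (tangentEval_sub_quadratic lam mu al A B C').symm.trans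
        (RingHom.mem_ker.1 (hker (Ideal.subset_span (Set.mem_insert _ _))))
    obtain ⟨hval₂, hder₂⟩ := (inl_add_inl_mul_eps_eq_zero_iff _ _).1 <|
      (tangentEval_cubic lam mu al p q r).symm.trans
        (RingHom.mem_ker.1 (hker (Ideal.subset_span (Set.mem_insert_of_mem _ rfl))))
    refine ⟨by linear_combination -hder₁, by linear_combination al * hder₁ - hval₁,
      by linear_combination hder₂, by linear_combination hval₂⟩
  · rintro ⟨hB, hC, hq, hr⟩
    exact Ideal.span_le.2 (Set.pair_subset (sub_quadratic_mem_span hB hC) (cubic_mem_span hq hr))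
end

section
/- The map from ℂ⁶ to the set of ideals of ℂ[u,v] sending (A, B, C, p, q, r) to the ideal (v − (A·u² + B·u + C), u³ + p·u² + q·u + r) is injective. -/
/-!
Write `f = A u² + B u + C` and `g = u³ + p u² + q u + r`. Substituting `v = f(u)` maps the ideal
`(v - f(u), g(u))` into the principal ideal `(g)` of `ℂ[u]`. Hence if the ideals of `(f, g)` and
`(f', g')` coincide, then `g ∣ f - f'` and `g, g'` divide each other. Since `g, g'` are monic,
`g = g'`, and since `deg (f - f') < 3 = deg g`, also `f = f'`.
-/

open MvPolynomial

open scoped Polynomial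

section GraphIdeal

variable {R : Type*} [CommRing R]

noncomputable def graphIdeal (f g : R[X]) : Ideal (MvPolynomial (Fin 2) R) :=
  Ideal.span {X 1 - Polynomial.aeval (X 0) f, Polynomial.aeval (X 0) g}

noncomputable def graphEval (f : R[X]) : MvPolynomial (Fin 2) R →ₐ[R] R[X] :=
  aeval ![Polynomial.X, f]

@[simp]
lemma graphEval_X_one (f : R[X]) : graphEval f (X 1) = f := by
  simp [graphEval]

@[simp]
lemma graphEval_aeval_X_zero (f p : R[X]) : graphEval f (Polynomial.aeval (X 0) p) = p := by
  rw [← Polynomial.aeval_algHom_apply]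
  simp [graphEval]

lemma graphIdeal_le_comap_graphEval (f g : R[X]) :
    graphIdeal f g ≤ (Ideal.span {g}).comap (graphEval f) := by
  rw [graphIdeal, Ideal.span_le, Set.insert_subset_iff, Set.singleton_subset_iff]
  simp

lemma dvd_of_graphIdeal_le {f g f' g' : R[X]} (h : graphIdeal f' g' ≤ graphIdeal f g) :
    g ∣ f - f' ∧ g ∣ g' := by
  have hdvd : ∀ x ∈ graphIdeal f' g', g ∣ graphEval f x := fun x hx =>
    Ideal.mem_span_singleton.mp (graphIdeal_le_comap_graphEval f g (h hx))
  constructor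
  · simpa using hdvd _ (Ideal.subset_span (Set.mem_insert _ _))
  · simpa using hdvd _ (Ideal.subset_span (Set.mem_insert_of_mem _ rfl))

lemma eq_of_graphIdeal_eq [IsDomain R] {f g f' g' : R[X]} (hg : g.Monic) (hg' : g'.Monic)
    (hf : f.degree < g.degree) (hf' : f'.degree < g'.degree)
    (h : graphIdeal f g = graphIdeal f' g') : f = f' ∧ g = g' := by
  obtain ⟨hff', hgg'⟩ := dvd_of_graphIdeal_le h.ge
  obtain ⟨-, hg'g⟩ := dvd_of_graphIdeal_le h.le
  have hg_eq : g = g' :=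
    Polynomial.eq_of_monic_of_associated hg hg' (associated_of_dvd_dvd hgg' hg'g)
  refine ⟨sub_eq_zero.mp (Polynomial.eq_zero_of_dvd_of_degree_lt hff' ?_), hg_eq⟩
  exact (Polynomial.degree_sub_le f f').trans_lt (max_lt hf (hg_eq ▸ hf'))

end GraphIdeal

/-- The map `ℂ⁶ → {ideals of ℂ[u,v]}` sending `(A, B, C, p, q, r)` to the ideal
`(v − (A·u² + B·u + C), u³ + p·u² + q·u + r)` (with `u = X 0`, `v = X 1`) is injective. -/
theorem hilbert_param_injective :
    Function.Injective
      (fun t : ℂ × ℂ × ℂ × ℂ × ℂ × ℂ =>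
        Ideal.span
          {(X 1 : MvPolynomial (Fin 2) ℂ) - (C t.1 * X 0 ^ 2 + C t.2.1 * X 0 + C t.2.2.1),
            X 0 ^ 3 + C t.2.2.2.1 * X 0 ^ 2 + C t.2.2.2.2.1 * X 0 + C t.2.2.2.2.2}) := by
  have hdeg (a b c p q r : ℂ) :
      (Cubic.toPoly ⟨0, a, b, c⟩).degree < (Cubic.toPoly ⟨1, p, q, r⟩).degree := by
    rw [Cubic.degree_of_a_ne_zero' one_ne_zero]
    exact Cubic.degree_of_a_eq_zero'.trans_lt (by decide)
  rintro ⟨a, b, c, p, q, r⟩ ⟨a', b', c', p', q', r'⟩ h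
  obtain ⟨hf, hg⟩ := eq_of_graphIdeal_eq Cubic.monic_of_a_eq_one' Cubic.monic_of_a_eq_one'
    (hdeg a b c p q r) (hdeg a' b' c' p' q' r') (by simpa [graphIdeal, Cubic.toPoly] using h)
  obtain ⟨-, rfl, rfl, rfl⟩ := Cubic.mk.inj ((Cubic.toPoly_injective _ _).mp hf)
  obtain ⟨-, rfl, rfl, rfl⟩ := Cubic.mk.inj ((Cubic.toPoly_injective _ _).mp hg)
  rfl
end

section
/- Let I be an ideal of ℂ[u,v]. Then the ideal (u², uv, v²) is contained in I and dim_ℂ ℂ[u,v]/I = 2 if and only if there exists (a, b) ∈ ℂ² with (a, b) ≠ (0, 0) such that I = (a·u + b·v, u², uv, v²). -/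
open MvPolynomial Finsupp
abbrev R2 := MvPolynomial (Fin 2) ℂ

theorem fin2_repr (m : Fin 2 →₀ ℕ) : m = single 0 (m 0) + single 1 (m 1) := by
  ext i; fin_cases i <;> simp [Finsupp.single_apply]

theorem classify (m : Fin 2 →₀ ℕ) (h0 : m ≠ 0) (h1 : m ≠ single 0 1) (h2 : m ≠ single 1 1) :
    single 0 2 ≤ m ∨ single 0 1 + single 1 1 ≤ m ∨ single 1 2 ≤ m := by
  have h0' : ¬(m 0 = 0 ∧ m 1 = 0) := by
    rintro ⟨x, y⟩; exact h0 (by rw [fin2_repr m, x, y]; simp)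
  have h1' : ¬(m 0 = 1 ∧ m 1 = 0) := by
    rintro ⟨x, y⟩; exact h1 (by rw [fin2_repr m, x, y]; simp)
  have h2' : ¬(m 0 = 0 ∧ m 1 = 1) := by
    rintro ⟨x, y⟩; exact h2 (by rw [fin2_repr m, x, y]; simp)
  rw [Finsupp.single_le_iff, Finsupp.single_le_iff, Finsupp.le_def]
  by_cases ha : 2 ≤ m 0
  · left; exact ha
  by_cases hb : 2 ≤ m 1
  · right; right; exact hb
  right; left
  intro k
  rw [Finsupp.add_apply]
  fin_cases k <;> simp [Finsupp.single_apply] <;> omega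

noncomputable def phi : R2 →ₗ[ℂ] (Fin 3 → ℂ) where
  toFun p := ![coeff 0 p, coeff (single 0 1) p, coeff (single 1 1) p]
  map_add' p q := by funext i; fin_cases i <;> simp [coeff_add]
  map_smul' c p := by funext i; fin_cases i <;> simp [coeff_smul]

theorem phi_apply (p : R2) :
    phi p = ![coeff 0 p, coeff (single 0 1) p, coeff (single 1 1) p] := rfl

theorem msq_eq : Ideal.span {(X 0 : R2) ^ 2, X 0 * X 1, X 1 ^ 2} =
    Ideal.span ((fun s => monomial s (1:ℂ)) ''
      {single 0 2, single 0 1 + single 1 1, single 1 2}) := by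
  congr 1
  rw [Set.image_insert_eq, Set.image_insert_eq, Set.image_singleton]
  congr 1
  · rw [X_pow_eq_monomial]
  congr 1
  · rw [X, X, monomial_mul, one_mul]
  · rw [X_pow_eq_monomial]

theorem mem_msq_iff (p : R2) :
    p ∈ Ideal.span {(X 0 : R2) ^ 2, X 0 * X 1, X 1 ^ 2} ↔ phi p = 0 := by
  rw [msq_eq, mem_ideal_span_monomial_image]
  constructor
  · intro h
    have key : ∀ m : Fin 2 →₀ ℕ, (m = 0 ∨ m = single 0 1 ∨ m = single 1 1) →
        coeff m p = 0 := by
      intro m hm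
      by_contra hc
      obtain ⟨si, hsi, hle⟩ := h m (MvPolynomial.mem_support_iff.mpr hc)
      have hv : ∀ k, si k ≤ m k := Finsupp.le_def.mp hle
      have h00 := hv 0
      have h11 := hv 1
      rcases hsi with rfl | rfl | rfl <;> rcases hm with rfl | rfl | rfl <;>
        simp [Finsupp.single_apply] at h00 h11
    funext i
    fin_cases i <;>
      simp [phi_apply, key 0 (Or.inl rfl), key _ (Or.inr (Or.inl rfl)),
        key _ (Or.inr (Or.inr rfl))]
  · intro h m hm
    have h0 := congrFun h 0
    have h1 := congrFun h 1
    have h2 := congrFun h 2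
    simp [phi_apply] at h0 h1 h2
    have hm' := MvPolynomial.mem_support_iff.mp hm
    have c1 : m ≠ 0 := fun e => hm' (e ▸ h0)
    have c2 : m ≠ single 0 1 := fun e => hm' (e ▸ h1)
    have c3 : m ≠ single 1 1 := fun e => hm' (e ▸ h2)
    rcases classify m c1 c2 c3 with h | h | h
    · exact ⟨_, Or.inl rfl, h⟩
    · exact ⟨_, Or.inr (Or.inl rfl), h⟩
    · exact ⟨_, Or.inr (Or.inr rfl), h⟩

theorem sne0 : (single (0:Fin 2) (1:ℕ)) ≠ 0 := by simp [Finsupp.single_eq_zero]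
theorem sne1 : (single (1:Fin 2) (1:ℕ)) ≠ 0 := by simp [Finsupp.single_eq_zero]
theorem sne01 : (single (0:Fin 2) (1:ℕ)) ≠ single 1 1 := by
  intro h
  have := DFunLike.congr_fun h 0
  simp [Finsupp.single_apply] at this

theorem phi_lin (a b : ℂ) : phi (C a * X 0 + C b * X 1) = ![0, a, b] := by
  funext i
  fin_cases i <;>
    simp [phi_apply, coeff_add, coeff_C_mul, coeff_X', sne0, sne1, sne01, sne01.symm,
      sne0.symm, sne1.symm]

theorem phi_surj : Function.Surjective phi := by
  intro t
  refine ⟨C (t 0) + (C (t 1) * X 0 + C (t 2) * X 1), ?_⟩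
  rw [map_add, phi_lin]
  funext i
  fin_cases i <;>
    simp [phi_apply, coeff_C, sne0.symm, sne1.symm]

theorem finrank_quot (K : Ideal R2)
    (hK : Ideal.span {(X 0 : R2) ^ 2, X 0 * X 1, X 1 ^ 2} ≤ K) :
    Module.finrank ℂ (R2 ⧸ K) +
      Module.finrank ℂ (Submodule.map phi (K.restrictScalars ℂ)) = 3 := by
  set W := Submodule.map phi (K.restrictScalars ℂ)
  have hker : LinearMap.ker phi ≤ K.restrictScalars ℂ := by
    intro x hx
    exact hK ((mem_msq_iff x).mpr hx)
  have hkerpsi : LinearMap.ker (W.mkQ.comp phi) = K.restrictScalars ℂ := by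
    rw [LinearMap.ker_comp, Submodule.ker_mkQ, Submodule.comap_map_eq]
    exact sup_eq_left.mpr hker
  have hsurj : Function.Surjective (W.mkQ.comp phi) :=
    (Submodule.mkQ_surjective W).comp phi_surj
  have e1 := (W.mkQ.comp phi).quotKerEquivOfSurjective hsurj
  rw [hkerpsi] at e1
  have e2 : (R2 ⧸ K.restrictScalars ℂ) ≃ₗ[ℂ] (R2 ⧸ K) :=
    Submodule.Quotient.restrictScalarsEquiv ℂ K
  have h1 : Module.finrank ℂ (R2 ⧸ K) = Module.finrank ℂ ((Fin 3 → ℂ) ⧸ W) := by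
    rw [← e2.finrank_eq, e1.finrank_eq]
  rw [h1, Submodule.finrank_quotient_add_finrank W]
  simp [Module.finrank_fintype_fun_eq_card]

theorem coeff_single_mul (i : Fin 2) (p q : R2) :
    coeff (single i 1) (p * q) =
      coeff 0 p * coeff (single i 1) q + coeff (single i 1) p * coeff 0 q := by
  have hone : Finset.HasAntidiagonal.antidiagonal (1 : ℕ) = {(0,1),(1,0)} := by decide
  have hanti : Finset.HasAntidiagonal.antidiagonal (single i 1) =
      {((0 : Fin 2 →₀ ℕ), single i 1), (single i 1, 0)} := by
    rw [Finsupp.antidiagonal_single, hone]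
    simp
  rw [coeff_mul, hanti, Finset.sum_pair (by simp [Finsupp.single_eq_zero])]

theorem coeff_zero_mul' (p q : R2) : coeff 0 (p * q) = coeff 0 p * coeff 0 q := by
  have := map_mul (constantCoeff (R := ℂ) (σ := Fin 2)) p q
  simpa [constantCoeff_eq] using this

theorem coeff_X0 : ∀ m, coeff m (X (0:Fin 2) : R2) = if single (0:Fin 2) (1:ℕ) = m then 1 else 0 :=
  fun m => coeff_X' 0 m

/-- For an ideal `I` of `ℂ[u,v]` (with `u = X 0`, `v = X 1`): the ideal `(u², uv, v²)` is
contained in `I` and `dim_ℂ ℂ[u,v]/I = 2` if and only if there exists `(a, b) ≠ (0, 0)` in `ℂ²`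
with `I = (a·u + b·v, u², uv, v²)`. -/
theorem length_two_in_fat_point_iff (I : Ideal (MvPolynomial (Fin 2) ℂ)) :
    (Ideal.span {(X 0 : MvPolynomial (Fin 2) ℂ) ^ 2, X 0 * X 1, X 1 ^ 2} ≤ I ∧
        Module.finrank ℂ (MvPolynomial (Fin 2) ℂ ⧸ I) = 2)
      ↔ ∃ a b : ℂ, (a, b) ≠ (0, 0) ∧
          I = Ideal.span {C a * X 0 + C b * X 1,
            (X 0 : MvPolynomial (Fin 2) ℂ) ^ 2, X 0 * X 1, X 1 ^ 2} := by
  constructor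
  · rintro ⟨hm, hr⟩
    set W := Submodule.map phi (I.restrictScalars ℂ) with hWdef
    haveI : FiniteDimensional ℂ (↥W) := FiniteDimensional.finiteDimensional_submodule W
    have hq := finrank_quot I hm
    rw [hr, ← hWdef] at hq
    have hW1 : Module.finrank ℂ W = 1 := by omega
    have hWbot : W ≠ ⊥ := by
      intro h
      rw [h] at hW1
      simp at hW1
    obtain ⟨w, hwW, hw0⟩ := Submodule.exists_mem_ne_zero_of_ne_bot hWbot
    have hWspan : W = Submodule.span ℂ {w} := by
      refine (Submodule.eq_of_le_of_finrank_eq ?_ ?_).symm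
      · rw [Submodule.span_le, Set.singleton_subset_iff]; exact hwW
      · rw [hW1, finrank_span_singleton hw0]
    obtain ⟨p, hpI, hpw⟩ := hwW
    have hpI' : p ∈ I := hpI
    -- first coordinate of w vanishes
    have hup : phi (X 0 * p) = ![0, w 0, 0] := by
      have hw0c : w 0 = coeff 0 p := by rw [← hpw]; rfl
      funext i
      fin_cases i <;>
        simp [phi_apply, coeff_zero_mul', coeff_single_mul, coeff_X0,
          coeff_X' (1:Fin 2), sne0.symm, sne01, sne01.symm, hw0c]
    have hmemW : ![0, w 0, 0] ∈ W := ⟨X 0 * p, I.mul_mem_left (X 0) hpI', hup⟩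
    rw [hWspan, Submodule.mem_span_singleton] at hmemW
    obtain ⟨t, ht⟩ := hmemW
    have ht0 : t * w 0 = 0 := congrFun ht 0
    have ht1 : t * w 1 = w 0 := congrFun ht 1
    have hw00 : w 0 = 0 := by
      rcases mul_eq_zero.mp ht0 with h | h
      · rw [← ht1, h, zero_mul]
      · exact h
    refine ⟨w 1, w 2, ?_, ?_⟩
    · intro h
      have h1 : w 1 = 0 := congrArg Prod.fst h
      have h2 : w 2 = 0 := congrArg Prod.snd h
      apply hw0
      funext i
      fin_cases i <;> simp [hw00, h1, h2]
    · set l : R2 := C (w 1) * X 0 + C (w 2) * X 1 with hl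
      have hphil : phi l = w := by
        rw [phi_lin]
        funext i
        fin_cases i <;> simp [hw00]
      have hmsqI : ∀ x : R2, phi x = 0 → x ∈ I := fun x hx => hm ((mem_msq_iff x).mpr hx)
      have hJle : Ideal.span {l, (X 0 : R2) ^ 2, X 0 * X 1, X 1 ^ 2} ≤ I := by
        rw [Ideal.span_le]
        rintro x (rfl | rfl | rfl | rfl)
        · have : l - p ∈ I := hmsqI _ (by rw [map_sub, hphil, hpw, sub_self])
          have := I.add_mem this hpI'
          simpa using this
        · exact hm (Ideal.subset_span (by simp))
        · exact hm (Ideal.subset_span (by simp))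
        · exact hm (Ideal.subset_span (by simp))
      refine le_antisymm ?_ hJle
      intro x hx
      have hphix : phi x ∈ W := ⟨x, hx, rfl⟩
      rw [hWspan, Submodule.mem_span_singleton] at hphix
      obtain ⟨s, hs⟩ := hphix
      have hxl : x - s • l ∈ Ideal.span {l, (X 0 : R2) ^ 2, X 0 * X 1, X 1 ^ 2} := by
        have : phi (x - s • l) = 0 := by
          rw [map_sub, map_smul, hphil, hs, sub_self]
        have hmem := (mem_msq_iff _).mpr this
        exact Ideal.span_mono (Set.subset_insert _ _) hmem
      have hsl : s • l ∈ Ideal.span {l, (X 0 : R2) ^ 2, X 0 * X 1, X 1 ^ 2} := by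
        rw [smul_eq_C_mul]
        exact Ideal.mul_mem_left _ _ (Ideal.subset_span (by simp))
      simpa using Ideal.add_mem _ hxl hsl
  · rintro ⟨a, b, hab, rfl⟩
    set l : R2 := C a * X 0 + C b * X 1 with hl
    set J := Ideal.span {l, (X 0 : R2) ^ 2, X 0 * X 1, X 1 ^ 2} with hJ
    have hle : Ideal.span {(X 0 : R2) ^ 2, X 0 * X 1, X 1 ^ 2} ≤ J :=
      Ideal.span_mono (Set.subset_insert _ _)
    refine ⟨hle, ?_⟩
    have hvne : (![0, a, b] : Fin 3 → ℂ) ≠ 0 := by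
      intro h
      exact hab (Prod.ext (by simpa using congrFun h 1) (by simpa using congrFun h 2))
    have hWeq : Submodule.map phi (J.restrictScalars ℂ) = Submodule.span ℂ {![0, a, b]} := by
      apply le_antisymm
      · rintro _ ⟨x, hx, rfl⟩
        have hx' : x ∈ J := hx
        rw [hJ] at hx'
        clear hx
        induction hx' using Submodule.span_induction with
        | mem y hy =>
          rcases hy with rfl | rfl | rfl | rfl
          · exact Submodule.subset_span (by rw [phi_lin]; exact Set.mem_singleton _)
          · rw [(mem_msq_iff _).mp (Ideal.subset_span (by simp))]; exact Submodule.zero_mem _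
          · rw [(mem_msq_iff _).mp (Ideal.subset_span (by simp))]; exact Submodule.zero_mem _
          · rw [(mem_msq_iff _).mp (Ideal.subset_span (by simp))]; exact Submodule.zero_mem _
        | zero => rw [map_zero]; exact Submodule.zero_mem _
        | add y z _ _ hy hz => rw [map_add]; exact Submodule.add_mem _ hy hz
        | smul r y _ hy =>
          rw [Submodule.mem_span_singleton] at hy ⊢
          obtain ⟨t, ht⟩ := hy
          refine ⟨coeff 0 r * t, ?_⟩
          have hy0 : coeff 0 y = 0 := by
            have := congrFun ht 0
            simpa [phi_apply] using this.symm
          have hy1 : coeff (single 0 1) y = t * a := by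
            have := congrFun ht 1
            simpa [phi_apply] using this.symm
          have hy2 : coeff (single 1 1) y = t * b := by
            have := congrFun ht 2
            simpa [phi_apply] using this.symm
          have : r • y = r * y := rfl
          rw [this]
          funext i
          fin_cases i <;>
            simp [phi_apply, coeff_zero_mul', coeff_single_mul, hy0, hy1, hy2] <;> ring
      · rw [Submodule.span_le, Set.singleton_subset_iff]
        exact ⟨l, Ideal.subset_span (by simp), phi_lin a b⟩
    have hq := finrank_quot J hle
    rw [hWeq, finrank_span_singleton hvne] at hq
    have hq' : Module.finrank ℂ (MvPolynomial (Fin 2) ℂ ⧸ J) + 1 = 3 := hq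
    omega
end

section
/- Let λ, μ, α, β, m₁, m₂, m₃, m₄, m₅, m₆ ∈ ℂ, and in ℂ[U,V,W] let I = (V − λ·U − μ·W, U² − α·UW − β·W²). Define M₂₃ = (−U + m₂W)(−U + m₆W) − (V + m₅W)(m₃W), M₁₃ = (V + m₁W)(−U + m₆W) − (m₄W)(m₃W), and M₁₂ = (V + m₁W)(V + m₅W) − (m₄W)(−U + m₂W) (the 2×2 minors of the matrix with rows (V + m₁W, m₄W), (−U + m₂W, V + m₅W), (m₃W, −U + m₆W)). Then M₂₃ − ((α − m₂ − m₆ − λm₃)·UW + (β − μm₃ + m₂m₆ − m₃m₅)·W²) ∈ I, M₁₃ − ((λm₆ − λα − μ − m₁)·UW + (μm₆ − λβ + m₁m₆ − m₃m₄)·W²) ∈ I, and M₁₂ − ((λ²α + 2λμ + m₄ + λm₁ + λm₅)·UW + (λ²β + μ² + μm₁ + μm₅ + m₁m₅ − m₂m₄)·W²) ∈ I. -/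
/-!
Modulo `I`, first replace `V` by `λU + μW` using the linear generator; what is left of each
minor is a quadratic form in `U, W`, and its `U²`-coefficient is removed with the quadratic
generator. Given the cofactors of the generators, each congruence is a polynomial identity,
valid over any commutative ring.
-/

open MvPolynomial

section Minors

variable {R : Type*} [CommRing R] (u v w l m a b m₁ m₂ m₃ m₄ m₅ m₆ : R)

theorem minor₂₃_sub_mem_span_pair :
    (-u + m₂ * w) * (-u + m₆ * w) - (v + m₅ * w) * (m₃ * w) -
        ((a - m₂ - m₆ - l * m₃) * (u * w) + (b - m * m₃ + m₂ * m₆ - m₃ * m₅) * w ^ 2) ∈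
      Ideal.span {v - l * u - m * w, u ^ 2 - a * (u * w) - b * w ^ 2} :=
  Ideal.mem_span_pair.mpr ⟨-(m₃ * w), 1, by ring⟩

theorem minor₁₃_sub_mem_span_pair :
    (v + m₁ * w) * (-u + m₆ * w) - m₄ * w * (m₃ * w) -
        ((l * m₆ - l * a - m - m₁) * (u * w) + (m * m₆ - l * b + m₁ * m₆ - m₃ * m₄) * w ^ 2) ∈
      Ideal.span {v - l * u - m * w, u ^ 2 - a * (u * w) - b * w ^ 2} :=
  Ideal.mem_span_pair.mpr ⟨-u + m₆ * w, -l, by ring⟩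

theorem minor₁₂_sub_mem_span_pair :
    (v + m₁ * w) * (v + m₅ * w) - m₄ * w * (-u + m₂ * w) -
        ((l ^ 2 * a + 2 * l * m + m₄ + l * m₁ + l * m₅) * (u * w) +
          (l ^ 2 * b + m ^ 2 + m * m₁ + m * m₅ + m₁ * m₅ - m₂ * m₄) * w ^ 2) ∈
      Ideal.span {v - l * u - m * w, u ^ 2 - a * (u * w) - b * w ^ 2} :=
  Ideal.mem_span_pair.mpr ⟨v + l * u + m * w + m₁ * w + m₅ * w, l ^ 2, by ring⟩

end Minors

/-- In `ℂ[U,V,W]` (with `U = X 0`, `V = X 1`, `W = X 2`), let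
`I = (V − λU − μW, U² − αUW − βW²)`, and let `M₂₃`, `M₁₃`, `M₁₂` be the 2×2 minors of the
matrix with rows `(V + m₁W, m₄W)`, `(−U + m₂W, V + m₅W)`, `(m₃W, −U + m₆W)`. Then modulo `I`
each minor is congruent to the stated combination of `UW` and `W²`. -/
theorem minors_congruences (lam mu al be m₁ m₂ m₃ m₄ m₅ m₆ : ℂ) :
    ((-X 0 + C m₂ * X 2) * (-X 0 + C m₆ * X 2) -
          ((X 1 : MvPolynomial (Fin 3) ℂ) + C m₅ * X 2) * (C m₃ * X 2) -
        (C (al - m₂ - m₆ - lam * m₃) * (X 0 * X 2) +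
          C (be - mu * m₃ + m₂ * m₆ - m₃ * m₅) * X 2 ^ 2) ∈
      Ideal.span {(X 1 : MvPolynomial (Fin 3) ℂ) - C lam * X 0 - C mu * X 2,
        X 0 ^ 2 - C al * (X 0 * X 2) - C be * X 2 ^ 2}) ∧
    (((X 1 : MvPolynomial (Fin 3) ℂ) + C m₁ * X 2) * (-X 0 + C m₆ * X 2) -
          (C m₄ * X 2) * (C m₃ * X 2) -
        (C (lam * m₆ - lam * al - mu - m₁) * (X 0 * X 2) +
          C (mu * m₆ - lam * be + m₁ * m₆ - m₃ * m₄) * X 2 ^ 2) ∈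
      Ideal.span {(X 1 : MvPolynomial (Fin 3) ℂ) - C lam * X 0 - C mu * X 2,
        X 0 ^ 2 - C al * (X 0 * X 2) - C be * X 2 ^ 2}) ∧
    (((X 1 : MvPolynomial (Fin 3) ℂ) + C m₁ * X 2) * (X 1 + C m₅ * X 2) -
          (C m₄ * X 2) * (-X 0 + C m₂ * X 2) -
        (C (lam ^ 2 * al + 2 * lam * mu + m₄ + lam * m₁ + lam * m₅) * (X 0 * X 2) +
          C (lam ^ 2 * be + mu ^ 2 + mu * m₁ + mu * m₅ + m₁ * m₅ - m₂ * m₄) * X 2 ^ 2) ∈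
      Ideal.span {(X 1 : MvPolynomial (Fin 3) ℂ) - C lam * X 0 - C mu * X 2,
        X 0 ^ 2 - C al * (X 0 * X 2) - C be * X 2 ^ 2}) := by
  simp only [map_sub, map_add, map_mul, map_pow, map_ofNat]
  exact ⟨by apply minor₂₃_sub_mem_span_pair, by apply minor₁₃_sub_mem_span_pair,
    by apply minor₁₂_sub_mem_span_pair⟩
end

section
/- Let I be an ideal of ℂ[u,v]. The following are equivalent: (i) I is contained in the ideal (u², v), dim_ℂ ℂ[u,v]/I = 3, and the radical of I equals the ideal (u, v); (ii) either I = (u², uv, v²), or there exists A ∈ ℂ such that I = (v − A·u², u³). -/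
open MvPolynomial Module

set_option maxHeartbeats 1000000
set_option synthInstance.maxHeartbeats 400000

namespace FibreAux

noncomputable abbrev RR := MvPolynomial (Fin 2) ℂ
noncomputable abbrev uu : RR := X 0
noncomputable abbrev vv : RR := X 1
noncomputable abbrev mI : Ideal RR := Ideal.span {uu, vv}
noncomputable abbrev msqI : Ideal RR := Ideal.span {uu ^ 2, uu * vv, vv ^ 2}
noncomputable abbrev KA (A : ℂ) : Ideal RR := Ideal.span {vv - C A * uu ^ 2, uu ^ 3}
noncomputable abbrev JJ : Ideal RR := Ideal.span {uu ^ 2, vv}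
noncomputable abbrev SS := AdjoinRoot ((Polynomial.X : Polynomial ℂ) ^ 3)
noncomputable abbrev ρ : SS := AdjoinRoot.root _
noncomputable abbrev φA (A : ℂ) : RR →ₐ[ℂ] SS :=
  MvPolynomial.aeval ![ρ, algebraMap ℂ SS A * ρ ^ 2]


/-- general spanning helper -/
lemma sup_eq_top (s : Set RR) (K : Ideal RR) (h1 : (1 : RR) ∈ s)
    (hmul : ∀ x ∈ s, ∀ i : Fin 2, x * X i ∈ Submodule.span ℂ s ⊔ K.restrictScalars ℂ) :
    Submodule.span ℂ s ⊔ K.restrictScalars ℂ = ⊤ := by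
  set T := Submodule.span ℂ s ⊔ K.restrictScalars ℂ with hT
  rw [Submodule.eq_top_iff']
  intro f
  induction f using MvPolynomial.induction_on with
  | C a =>
      have : (C a : RR) = a • (1 : RR) := by
        rw [MvPolynomial.smul_eq_C_mul, mul_one]
      rw [this]
      exact Submodule.mem_sup_left (Submodule.smul_mem _ _ (Submodule.subset_span h1))
  | add p q hp hq => exact T.add_mem hp hq
  | mul_X p i hp =>
      rcases Submodule.mem_sup.mp hp with ⟨y, hy, z, hz, rfl⟩
      have hy' : y * X i ∈ T := by
        have hmap : y * X i ∈ Submodule.map (LinearMap.mulRight ℂ (X i : RR)) (Submodule.span ℂ s) :=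
          ⟨y, hy, rfl⟩
        rw [Submodule.map_span] at hmap
        refine Submodule.span_le.mpr ?_ hmap
        rintro _ ⟨x, hx, rfl⟩
        exact hmul x hx i
      have hz' : z * X i ∈ T :=
        Submodule.mem_sup_right (Ideal.mul_mem_right _ K hz)
      simpa [add_mul] using T.add_mem hy' hz'

lemma constantCoeff_mem_m {f : RR} (hf : f ∈ mI) : constantCoeff f = 0 := by
  rcases Ideal.mem_span_pair.mp hf with ⟨p, q, rfl⟩
  simp

lemma mem_m_iff {f : RR} : f ∈ mI ↔ constantCoeff f = 0 := by
  refine ⟨constantCoeff_mem_m, fun hf => ?_⟩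
  have htop := sup_eq_top {1} mI (by simp) ?_
  · have hfT : f ∈ Submodule.span ℂ ({1} : Set RR) ⊔ mI.restrictScalars ℂ := by
      rw [htop]; trivial
    rcases Submodule.mem_sup.mp hfT with ⟨y, hy, z, hz, rfl⟩
    rcases Submodule.mem_span_singleton.mp hy with ⟨a, rfl⟩
    have : (a • (1:RR)) = C a := by rw [MvPolynomial.smul_eq_C_mul, mul_one]
    rw [this] at hf ⊢
    have hz0 : constantCoeff z = 0 := constantCoeff_mem_m hz
    have : a = 0 := by simpa [hz0] using hf
    simpa [this] using hz
  · rintro x (rfl : x = 1) i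
    refine Submodule.mem_sup_right ?_
    fin_cases i <;>
      simpa using Ideal.subset_span (by simp : _)

lemma ker_constantCoeff : RingHom.ker (constantCoeff : RR →+* ℂ) = mI := by
  ext f
  rw [RingHom.mem_ker, mem_m_iff]

lemma m_isMaximal : mI.IsMaximal := by
  rw [← ker_constantCoeff]
  exact RingHom.ker_isMaximal_of_surjective _ (fun c => ⟨C c, by simp⟩)

lemma m_radical : mI.radical = mI := m_isMaximal.isPrime.radical

lemma span_triple_eq_msq : msqI = mI ^ 2 := by
  apply le_antisymm
  · rw [Ideal.span_le]
    rintro x hx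
    have hu : uu ∈ mI := Ideal.subset_span (by simp)
    have hv : vv ∈ mI := Ideal.subset_span (by simp)
    rcases hx with rfl | rfl | rfl
    · rw [pow_two, pow_two]; exact Ideal.mul_mem_mul hu hu
    · rw [pow_two]; exact Ideal.mul_mem_mul hu hv
    · rw [pow_two, pow_two]; exact Ideal.mul_mem_mul hv hv
  · rw [pow_two]
    refine Ideal.mul_le.mpr ?_
    intro a ha b hb
    rcases Ideal.mem_span_pair.mp ha with ⟨p, q, rfl⟩
    rcases Ideal.mem_span_pair.mp hb with ⟨p', q', rfl⟩
    have h2 : (p * uu + q * vv) * (p' * uu + q' * vv) =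
        (p * p') * (uu ^ 2) + (p * q' + q * p') * (uu * vv) + (q * q') * (vv ^ 2) := by ring
    rw [h2]
    have g1 : (uu^2 : RR) ∈ Ideal.span {uu ^ 2, uu * vv, vv ^ 2} := Ideal.subset_span (by simp)
    have g2 : (uu * vv : RR) ∈ Ideal.span {uu ^ 2, uu * vv, vv ^ 2} := Ideal.subset_span (by simp)
    have g3 : (vv^2 : RR) ∈ Ideal.span {uu ^ 2, uu * vv, vv ^ 2} := Ideal.subset_span (by simp)
    exact Ideal.add_mem _ (Ideal.add_mem _ (Ideal.mul_mem_left _ _ g1) (Ideal.mul_mem_left _ _ g2))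
      (Ideal.mul_mem_left _ _ g3)

lemma msq_le_m : mI ^ 2 ≤ mI := by
  rw [pow_two]; exact Ideal.mul_le_left

lemma constantCoeff_msq {f : RR} (hf : f ∈ mI ^ 2) : constantCoeff f = 0 :=
  mem_m_iff.mp (msq_le_m hf)

lemma pderiv_msq {f : RR} (hf : f ∈ mI ^ 2) (i : Fin 2) : pderiv i f ∈ mI := by
  rw [pow_two] at hf
  refine Submodule.mul_induction_on hf (fun a ha b hb => ?_) (fun x y hx hy => ?_)
  · rw [pderiv_mul]
    exact Ideal.add_mem _ (Ideal.mul_mem_left _ _ hb) (Ideal.mul_mem_right _ _ ha)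
  · simpa using Ideal.add_mem _ hx hy

lemma quot_span_top (K : Ideal RR) (s : Set RR)
    (hs : Submodule.span ℂ s ⊔ K.restrictScalars ℂ = ⊤) :
    Submodule.span ℂ ((Ideal.Quotient.mkₐ ℂ K) '' s) = ⊤ := by
  have hmap : Submodule.map (Ideal.Quotient.mkₐ ℂ K).toLinearMap ⊤ = ⊤ := by
    rw [Submodule.map_top, LinearMap.range_eq_top]
    exact Ideal.Quotient.mkₐ_surjective ℂ K
  rw [← hs, Submodule.map_sup, Submodule.map_span] at hmap
  have hbot : Submodule.map (Ideal.Quotient.mkₐ ℂ K).toLinearMap (K.restrictScalars ℂ) = ⊥ := by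
    rw [Submodule.eq_bot_iff]
    rintro x ⟨y, hy, rfl⟩
    have h0 : (Ideal.Quotient.mk K) y = 0 := Ideal.Quotient.eq_zero_iff_mem.mpr hy
    simpa [Ideal.Quotient.mkₐ_eq_mk] using h0
  rw [hbot, sup_bot_eq] at hmap
  simpa using hmap

lemma finite_of_span_triple_top {V : Type*} [AddCommGroup V] [Module ℂ V] {a b c : V}
    (h : Submodule.span ℂ {a, b, c} = ⊤) : Module.Finite ℂ V :=
  Module.finite_def.mpr (Submodule.fg_def.mpr ⟨{a, b, c}, Set.toFinite _, h⟩)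

lemma finrank_eq_three {V : Type*} [AddCommGroup V] [Module ℂ V] {a b c : V}
    (h : Submodule.span ℂ {a, b, c} = ⊤)
    (hind : ∀ g₀ g₁ g₂ : ℂ, g₀ • a + g₁ • b + g₂ • c = 0 → g₀ = 0 ∧ g₁ = 0 ∧ g₂ = 0) :
    finrank ℂ V = 3 := by
  have hfin : Module.Finite ℂ V := finite_of_span_triple_top h
  have hle : finrank ℂ V ≤ 3 := by
    classical
    have := finrank_span_le_card (R := ℂ) ({a, b, c} : Set V)
    rw [h, finrank_top] at this
    refine this.trans ?_
    have : ({a, b, c} : Set V).toFinset ⊆ {a, b, c} := by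
      intro x hx
      simpa using Set.mem_toFinset.mp hx
    calc ({a, b, c} : Set V).toFinset.card ≤ ({a, b, c} : Finset V).card :=
          Finset.card_le_card this
      _ ≤ 3 := (Finset.card_insert_le _ _).trans
          (Nat.succ_le_succ ((Finset.card_insert_le _ _).trans (by simp)))
  have hge : 3 ≤ finrank ℂ V := by
    have hli : LinearIndependent ℂ ![a, b, c] := by
      rw [Fintype.linearIndependent_iff]
      intro g hg
      rw [Fin.sum_univ_three] at hg
      simp only [Matrix.cons_val_zero, Matrix.cons_val_one, Matrix.head_cons,
        Matrix.cons_val_two, Matrix.tail_cons] at hg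
      obtain ⟨h0, h1, h2⟩ := hind _ _ _ hg
      intro i
      fin_cases i <;> assumption
    simpa using hli.fintype_card_le_finrank
  omega

lemma msq_span_sup : Submodule.span ℂ {1, uu, vv} ⊔ msqI.restrictScalars ℂ = ⊤ := by
  refine sup_eq_top _ _ (by simp) ?_
  intro x hx i
  have hu : uu ∈ Submodule.span ℂ ({1, uu, vv} : Set RR) := Submodule.subset_span (by simp)
  have hv : vv ∈ Submodule.span ℂ ({1, uu, vv} : Set RR) := Submodule.subset_span (by simp)
  have g1 : (uu^2 : RR) ∈ msqI := Ideal.subset_span (by simp)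
  have g2 : (uu * vv : RR) ∈ msqI := Ideal.subset_span (by simp)
  have g3 : (vv^2 : RR) ∈ msqI := Ideal.subset_span (by simp)
  rcases hx with rfl | rfl | rfl <;> fin_cases i
  · simpa using Submodule.mem_sup_left hu
  · simpa using Submodule.mem_sup_left hv
  · exact Submodule.mem_sup_right (by simpa [pow_two] using g1)
  · exact Submodule.mem_sup_right (by simpa using g2)
  · exact Submodule.mem_sup_right (by simpa [mul_comm] using g2)
  · exact Submodule.mem_sup_right (by simpa [pow_two] using g3)

lemma msq_quot_span :
    Submodule.span ℂ {Ideal.Quotient.mkₐ ℂ msqI 1, Ideal.Quotient.mkₐ ℂ msqI uu,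
      Ideal.Quotient.mkₐ ℂ msqI vv} = ⊤ := by
  have := quot_span_top msqI {1, uu, vv} msq_span_sup
  rwa [Set.image_insert_eq, Set.image_insert_eq, Set.image_singleton] at this

lemma msq_finite : Module.Finite ℂ (RR ⧸ msqI) := finite_of_span_triple_top msq_quot_span

lemma msq_finrank : finrank ℂ (RR ⧸ msqI) = 3 := by
  refine finrank_eq_three msq_quot_span ?_
  intro g₀ g₁ g₂ hg
  have hmem : g₀ • (1 : RR) + g₁ • uu + g₂ • vv ∈ msqI := by
    rw [← Ideal.Quotient.eq_zero_iff_mem]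
    have : Ideal.Quotient.mk msqI (g₀ • (1 : RR) + g₁ • uu + g₂ • vv)
        = g₀ • Ideal.Quotient.mkₐ ℂ msqI 1 + g₁ • Ideal.Quotient.mkₐ ℂ msqI uu
          + g₂ • Ideal.Quotient.mkₐ ℂ msqI vv := by
      rw [← Ideal.Quotient.mkₐ_eq_mk ℂ, map_add, map_add, map_smul, map_smul, map_smul]
    rw [this, hg]
  rw [span_triple_eq_msq] at hmem
  have hw : g₀ • (1 : RR) + g₁ • uu + g₂ • vv
      = C g₀ + C g₁ * uu + C g₂ * vv := by
    rw [MvPolynomial.smul_eq_C_mul, MvPolynomial.smul_eq_C_mul, MvPolynomial.smul_eq_C_mul,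
      mul_one]
  rw [hw] at hmem
  refine ⟨?_, ?_, ?_⟩
  · simpa using constantCoeff_msq hmem
  · have := mem_m_iff.mp (pderiv_msq hmem 0)
    simpa [pderiv_mul] using this
  · have := mem_m_iff.mp (pderiv_msq hmem 1)
    simpa [pderiv_mul] using this

lemma KA_span_sup (A : ℂ) :
    Submodule.span ℂ {1, uu, uu ^ 2} ⊔ (KA A).restrictScalars ℂ = ⊤ := by
  refine sup_eq_top _ _ (by simp) ?_
  intro x hx i
  have hu : uu ∈ Submodule.span ℂ ({1, uu, uu ^ 2} : Set RR) := Submodule.subset_span (by simp)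
  have hu2 : (uu ^ 2 : RR) ∈ Submodule.span ℂ ({1, uu, uu ^ 2} : Set RR) :=
    Submodule.subset_span (by simp)
  have g1 : (vv - C A * uu ^ 2 : RR) ∈ KA A := Ideal.subset_span (by simp)
  have g2 : (uu ^ 3 : RR) ∈ KA A := Ideal.subset_span (by simp)
  have hi : X i = uu ∨ X i = vv := by fin_cases i <;> [exact Or.inl rfl; exact Or.inr rfl]
  rcases hx with rfl | rfl | rfl <;> rcases hi with hi | hi <;> rw [hi]
  · simpa using Submodule.mem_sup_left hu
  · -- 1 * v = (v - A u²) + A • u²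
    have : (1 : RR) * vv = (vv - C A * uu ^ 2) + A • (uu ^ 2) := by
      rw [MvPolynomial.smul_eq_C_mul]; ring
    rw [this]
    exact Submodule.add_mem _ (Submodule.mem_sup_right g1)
      (Submodule.mem_sup_left (Submodule.smul_mem _ _ hu2))
  · simpa [pow_two] using Submodule.mem_sup_left hu2
  · -- u * v = u (v - A u²) + A • u³ ∈ K
    have : uu * vv = uu * (vv - C A * uu ^ 2) + C A * uu ^ 3 := by ring
    rw [this]
    exact Submodule.mem_sup_right (Ideal.add_mem _ (Ideal.mul_mem_left _ _ g1)
      (Ideal.mul_mem_left _ _ g2))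
  · -- u² * u = u³
    have : (uu ^ 2) * uu = uu ^ 3 := by ring
    rw [this]
    exact Submodule.mem_sup_right g2
  · -- u² * v
    have : (uu ^ 2) * vv = uu ^ 2 * (vv - C A * uu ^ 2) + (C A * uu) * uu ^ 3 := by ring
    rw [this]
    exact Submodule.mem_sup_right (Ideal.add_mem _ (Ideal.mul_mem_left _ _ g1)
      (Ideal.mul_mem_left _ _ g2))

lemma rho_cube : (ρ : SS) ^ 3 = 0 := by
  have : (ρ : SS) ^ 3 = AdjoinRoot.mk _ ((Polynomial.X : Polynomial ℂ) ^ 3) := by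
    rw [map_pow, AdjoinRoot.mk_X]
  rw [this, AdjoinRoot.mk_self]

lemma KA_le_ker (A : ℂ) : KA A ≤ RingHom.ker (φA A : RR →+* SS) := by
  rw [Ideal.span_le]
  rintro x (rfl | rfl) <;> rw [SetLike.mem_coe, RingHom.mem_ker]
  · simp [φA, MvPolynomial.algHom_C]
  · simp [rho_cube]

lemma KA_quot_span (A : ℂ) :
    Submodule.span ℂ {Ideal.Quotient.mkₐ ℂ (KA A) 1, Ideal.Quotient.mkₐ ℂ (KA A) uu,
      Ideal.Quotient.mkₐ ℂ (KA A) (uu ^ 2)} = ⊤ := by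
  have := quot_span_top (KA A) {1, uu, uu ^ 2} (KA_span_sup A)
  rwa [Set.image_insert_eq, Set.image_insert_eq, Set.image_singleton] at this

lemma KA_finite (A : ℂ) : Module.Finite ℂ (RR ⧸ KA A) :=
  finite_of_span_triple_top (KA_quot_span A)

lemma KA_finrank (A : ℂ) : finrank ℂ (RR ⧸ KA A) = 3 := by
  refine finrank_eq_three (KA_quot_span A) ?_
  intro g₀ g₁ g₂ hg
  have hmem : g₀ • (1 : RR) + g₁ • uu + g₂ • uu ^ 2 ∈ KA A := by
    rw [← Ideal.Quotient.eq_zero_iff_mem]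
    have : Ideal.Quotient.mk (KA A) (g₀ • (1 : RR) + g₁ • uu + g₂ • uu ^ 2)
        = g₀ • Ideal.Quotient.mkₐ ℂ (KA A) 1 + g₁ • Ideal.Quotient.mkₐ ℂ (KA A) uu
          + g₂ • Ideal.Quotient.mkₐ ℂ (KA A) (uu ^ 2) := by
      rw [← Ideal.Quotient.mkₐ_eq_mk ℂ, map_add, map_add, map_smul, map_smul, map_smul]
    rw [this, hg]
  have h0 : (φA A) (g₀ • (1 : RR) + g₁ • uu + g₂ • uu ^ 2) = 0 := KA_le_ker A hmem
  have hS : algebraMap ℂ SS g₀ + algebraMap ℂ SS g₁ * ρ + algebraMap ℂ SS g₂ * ρ ^ 2 = 0 := by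
    have e : (φA A) (g₀ • (1 : RR) + g₁ • uu + g₂ • uu ^ 2)
        = algebraMap ℂ SS g₀ + algebraMap ℂ SS g₁ * ρ + algebraMap ℂ SS g₂ * ρ ^ 2 := by
      simp [Algebra.smul_def]
    rwa [e] at h0
  -- convert to a statement about polynomials
  have hmk : AdjoinRoot.mk ((Polynomial.X : Polynomial ℂ) ^ 3)
      (Polynomial.C g₀ + Polynomial.C g₁ * Polynomial.X + Polynomial.C g₂ * Polynomial.X ^ 2)
      = 0 := by
    rw [map_add, map_add, map_mul, map_mul, map_pow, AdjoinRoot.mk_X, AdjoinRoot.mk_C,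
      AdjoinRoot.mk_C, AdjoinRoot.mk_C]
    exact hS
  rw [AdjoinRoot.mk_eq_zero] at hmk
  have hp0 : (Polynomial.C g₀ + Polynomial.C g₁ * Polynomial.X
      + Polynomial.C g₂ * Polynomial.X ^ 2 : Polynomial ℂ) = 0 := by
    by_contra hne
    have hdeg := Polynomial.natDegree_le_of_dvd hmk hne
    have : ((Polynomial.X : Polynomial ℂ) ^ 3).natDegree = 3 := by
      simp
    rw [this] at hdeg
    have hle2 : (Polynomial.C g₀ + Polynomial.C g₁ * Polynomial.X
        + Polynomial.C g₂ * Polynomial.X ^ 2 : Polynomial ℂ).natDegree ≤ 2 := by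
      compute_degree
    omega
  refine ⟨?_, ?_, ?_⟩
  · have := congrArg (fun p => Polynomial.coeff p 0) hp0
    simpa using this
  · have := congrArg (fun p => Polynomial.coeff p 1) hp0
    simpa using this
  · have := congrArg (fun p => Polynomial.coeff p 2) hp0
    simpa using this

lemma le_of_quot_finrank {I J : Ideal RR} (hIJ : I ≤ J) [FiniteDimensional ℂ (RR ⧸ I)]
    (h : finrank ℂ (RR ⧸ I) = finrank ℂ (RR ⧸ J)) : J ≤ I := by
  have hlift : ∀ a : RR, a ∈ I → (Ideal.Quotient.mkₐ ℂ J) a = 0 := fun a ha => by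
    have : Ideal.Quotient.mk J a = 0 := Ideal.Quotient.eq_zero_iff_mem.mpr (hIJ ha)
    simpa [Ideal.Quotient.mkₐ_eq_mk] using this
  set f : (RR ⧸ I) →ₐ[ℂ] RR ⧸ J := Ideal.Quotient.liftₐ I (Ideal.Quotient.mkₐ ℂ J) hlift with hf
  have hfmk : ∀ x : RR, f (Ideal.Quotient.mk I x) = Ideal.Quotient.mk J x := fun x => by
    rw [hf, Ideal.Quotient.liftₐ_apply]
    rfl
  have hsurj : Function.Surjective f := by
    intro y
    obtain ⟨x, rfl⟩ := Ideal.Quotient.mk_surjective y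
    exact ⟨Ideal.Quotient.mk I x, hfmk x⟩
  have hker : LinearMap.ker f.toLinearMap = ⊥ := by
    have h1 := f.toLinearMap.finrank_range_add_finrank_ker
    have hrange : LinearMap.range f.toLinearMap = ⊤ :=
      LinearMap.range_eq_top.mpr (by exact hsurj)
    rw [hrange, finrank_top, ← h] at h1
    have h0 : finrank ℂ (LinearMap.ker f.toLinearMap) = 0 := by omega
    exact Submodule.finrank_eq_zero.mp h0
  intro x hx
  have hmem : Ideal.Quotient.mk I x ∈ LinearMap.ker f.toLinearMap := by
    have : f (Ideal.Quotient.mk I x) = 0 := by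
      rw [hfmk]; exact Ideal.Quotient.eq_zero_iff_mem.mpr hx
    simpa [LinearMap.mem_ker] using this
  rw [hker, Submodule.mem_bot] at hmem
  exact Ideal.Quotient.eq_zero_iff_mem.mp hmem

lemma cube_le {I : Ideal RR} (hIm : I ≤ mI) (hrad : I.radical = mI)
    [FiniteDimensional ℂ (RR ⧸ I)] (hdim : finrank ℂ (RR ⧸ I) = 3) : mI ^ 3 ≤ I := by
  classical
  have hfg : mI.FG := ⟨{uu, vv}, by simp⟩
  obtain ⟨n, hn⟩ := Ideal.exists_pow_le_of_le_radical_of_fg (le_of_eq hrad.symm) hfg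
  set π := Ideal.Quotient.mk I with hπ
  set M : Ideal (RR ⧸ I) := mI.map π with hM
  have hmapbot : ∀ k : ℕ, mI ^ k ≤ I ↔ M ^ k = ⊥ := by
    intro k
    rw [hM, ← Ideal.map_pow, Ideal.map_eq_bot_iff_le_ker, hπ, Ideal.mk_ker]
  have hMn : M ^ n = ⊥ := (hmapbot n).mp hn
  have stab : ∀ k, M ^ (k + 1) = M ^ k → M ^ k = ⊥ := by
    intro k hk
    have hj : ∀ j, M ^ (k + j) = M ^ k := by
      intro j
      induction j with
      | zero => rfl
      | succ j ih =>
          have : k + (j + 1) = (k + j) + 1 := by omega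
          rw [this]; exact (pow_succ M (k + j)).trans ((congrArg (· * M) ih).trans ((pow_succ M k).symm.trans hk))
    have : M ^ k ≤ M ^ n := by
      calc M ^ k = M ^ (k + n) := (hj n).symm
        _ ≤ M ^ n := Ideal.pow_le_pow_right (by omega)
    rw [hMn] at this
    exact le_bot_iff.mp this
  rw [hmapbot 3]
  by_contra h3
  have h32 : M ^ 3 < M ^ 2 := by
    refine lt_of_le_of_ne (Ideal.pow_le_pow_right (by omega)) (fun he => h3 ?_)
    have := stab 2 he
    exact le_bot_iff.mp (this ▸ Ideal.pow_le_pow_right (m := 2) (n := 3) (by omega))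
  have h21 : M ^ 2 < M ^ 1 := by
    refine lt_of_le_of_ne (Ideal.pow_le_pow_right (by omega)) (fun he => h3 ?_)
    have := stab 1 he
    exact le_bot_iff.mp (this ▸ Ideal.pow_le_pow_right (m := 1) (n := 3) (by omega))
  have hMtop : M ≠ ⊤ := by
    intro htop
    have h1M : (1 : RR ⧸ I) ∈ M := htop ▸ Submodule.mem_top
    rw [hM, Ideal.mem_map_iff_of_surjective π Ideal.Quotient.mk_surjective] at h1M
    obtain ⟨x, hxm, hx1⟩ := h1M
    have hx0 : x - 1 ∈ I := by
      have : π (x - 1) = 0 := by rw [map_sub, hx1, map_one, sub_self]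
      exact Ideal.Quotient.eq_zero_iff_mem.mp this
    have h1m : (1 : RR) ∈ mI := by
      have := mI.sub_mem hxm (hIm hx0)
      simpa using this
    have := mem_m_iff.mp h1m
    simp at this
  -- pass to ℂ-submodules
  set rs : Ideal (RR ⧸ I) → Submodule ℂ (RR ⧸ I) := fun N => N.restrictScalars ℂ with hrs
  have rs_lt : ∀ {N N' : Ideal (RR ⧸ I)}, N < N' → rs N < rs N' := by
    intro N N' hlt
    refine lt_of_le_of_ne (fun x hx => hlt.le hx) (fun he => hlt.ne ?_)
    ext x
    constructor
    · intro hx; exact (he ▸ (show x ∈ rs N from hx) : x ∈ rs N')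
    · intro hx; exact (he.symm ▸ (show x ∈ rs N' from hx) : x ∈ rs N)
  have hne3 : rs (M ^ 3) ≠ ⊥ := by
    intro hb
    apply h3
    rw [eq_bot_iff]
    intro x hx
    have hx' : x ∈ rs (M ^ 3) := hx
    rw [hb] at hx'
    exact hx'
  have hf3 : 0 < finrank ℂ (rs (M ^ 3)) :=
    Nat.pos_of_ne_zero (fun h0 => hne3 (Submodule.finrank_eq_zero.mp h0))
  have hlt1 : finrank ℂ (rs (M ^ 3)) < finrank ℂ (rs (M ^ 2)) :=
    Submodule.finrank_lt_finrank_of_lt (rs_lt h32)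
  have hlt2 : finrank ℂ (rs (M ^ 2)) < finrank ℂ (rs (M ^ 1)) :=
    Submodule.finrank_lt_finrank_of_lt (rs_lt h21)
  have hlt3 : finrank ℂ (rs (M ^ 1)) < 3 := by
    have hlttop : rs (M ^ 1) < ⊤ := by
      refine lt_top_iff_ne_top.mpr (fun he => hMtop ?_)
      rw [eq_top_iff]
      intro x _
      have hx' : x ∈ rs (M ^ 1) := he ▸ Submodule.mem_top
      exact (by simpa [pow_one] using hx' : x ∈ rs M)
    have := Submodule.finrank_lt hlttop.ne
    rwa [hdim] at this
  omega

lemma hu_m : uu ∈ mI := Ideal.subset_span (by simp)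
lemma hv_m : vv ∈ mI := Ideal.subset_span (by simp)

lemma J_le_m : JJ ≤ mI := by
  rw [Ideal.span_le]
  rintro x (rfl | rfl)
  · exact Ideal.pow_mem_of_mem _ hu_m 2 (by omega)
  · exact hv_m

lemma msq_le_J : msqI ≤ JJ := by
  rw [Ideal.span_le]
  have h1 : (uu ^ 2 : RR) ∈ JJ := Ideal.subset_span (by simp)
  have h2 : (vv : RR) ∈ JJ := Ideal.subset_span (by simp)
  rintro x (rfl | rfl | rfl)
  · exact h1
  · exact Ideal.mul_mem_left _ _ h2
  · rw [pow_two]; exact Ideal.mul_mem_left _ _ h2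

lemma msq_radical : msqI.radical = mI := by
  rw [span_triple_eq_msq, Ideal.radical_pow mI (n := 2) (by omega), m_radical]

lemma KA_le_J (A : ℂ) : KA A ≤ JJ := by
  rw [Ideal.span_le]
  rintro x (rfl | rfl)
  · exact Ideal.mem_span_pair.mpr ⟨-(C A), 1, by ring⟩
  · exact Ideal.mem_span_pair.mpr ⟨uu, 0, by ring⟩

lemma KA_le_m (A : ℂ) : KA A ≤ mI := (KA_le_J A).trans J_le_m

lemma KA_radical (A : ℂ) : (KA A).radical = mI := by
  apply le_antisymm
  · exact le_of_eq_of_le (by rfl) ((Ideal.radical_mono (KA_le_m A)).trans (le_of_eq m_radical))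
  · rw [Ideal.span_le]
    have hg1 : vv - C A * uu ^ 2 ∈ (KA A).radical := Ideal.le_radical (Ideal.subset_span (by simp))
    have hu_rad : uu ∈ (KA A).radical :=
      ⟨3, Ideal.subset_span (by simp)⟩
    rintro x (rfl | rfl)
    · exact hu_rad
    · have : (vv : RR) = (vv - C A * uu ^ 2) + (C A * uu) * uu := by ring
      rw [this]
      exact Ideal.add_mem _ hg1 (Ideal.mul_mem_left _ _ hu_rad)

lemma hm3 {a b c : RR} (ha : a ∈ mI) (hb : b ∈ mI) (hc : c ∈ mI) : a * b * c ∈ mI ^ 3 := by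
  rw [pow_succ, pow_succ, pow_one]
  exact Ideal.mul_mem_mul (Ideal.mul_mem_mul ha hb) hc

theorem fibre_classification (I : Ideal (MvPolynomial (Fin 2) ℂ)) :
    (I ≤ Ideal.span {(X 0 : MvPolynomial (Fin 2) ℂ) ^ 2, X 1} ∧
        Module.finrank ℂ (MvPolynomial (Fin 2) ℂ ⧸ I) = 3 ∧
        I.radical = Ideal.span {(X 0 : MvPolynomial (Fin 2) ℂ), X 1})
      ↔ (I = Ideal.span {(X 0 : MvPolynomial (Fin 2) ℂ) ^ 2, X 0 * X 1, X 1 ^ 2} ∨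
          ∃ A : ℂ, I = Ideal.span {(X 1 : MvPolynomial (Fin 2) ℂ) - C A * X 0 ^ 2, X 0 ^ 3}) := by
  constructor
  · rintro ⟨hle, hdim, hrad⟩
    have hfin : FiniteDimensional ℂ (RR ⧸ I) :=
      FiniteDimensional.of_finrank_pos (by rw [hdim]; omega)
    have hIm : I ≤ mI := le_trans hle J_le_m
    have hcube : mI ^ 3 ≤ I := cube_le hIm hrad hdim
    have hDcalc : ∀ p q : RR, constantCoeff (pderiv 1 (p * uu ^ 2 + q * vv)) = constantCoeff q := by
      intro p q
      simp [pderiv_mul]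
    by_cases hD : ∀ f ∈ I, constantCoeff (pderiv 1 f) = 0
    · left
      have hIms : I ≤ msqI := by
        intro f hf
        obtain ⟨p, q, hpq⟩ := Ideal.mem_span_pair.mp (hle hf)
        have hq0 : constantCoeff q = 0 := by
          rw [← hDcalc p q, hpq]
          exact hD f hf
        obtain ⟨α, β, hq⟩ := Ideal.mem_span_pair.mp (mem_m_iff.mpr hq0)
        have hf' : f = p * (uu ^ 2) + α * (uu * vv) + β * (vv ^ 2) := by
          rw [← hpq, ← hq]; ring
        rw [hf']
        have g1 : (uu ^ 2 : RR) ∈ msqI := Ideal.subset_span (by simp)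
        have g2 : (uu * vv : RR) ∈ msqI := Ideal.subset_span (by simp)
        have g3 : (vv ^ 2 : RR) ∈ msqI := Ideal.subset_span (by simp)
        exact Ideal.add_mem _ (Ideal.add_mem _ (Ideal.mul_mem_left _ _ g1)
          (Ideal.mul_mem_left _ _ g2)) (Ideal.mul_mem_left _ _ g3)
      have hback : msqI ≤ I := le_of_quot_finrank hIms (by rw [hdim, msq_finrank])
      exact le_antisymm hIms hback
    · right
      push_neg at hD
      obtain ⟨g, hgI, hgc⟩ := hD
      obtain ⟨p, q, hg⟩ := Ideal.mem_span_pair.mp (hle hgI)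
      set c : ℂ := constantCoeff q with hcdef
      have hc : c ≠ 0 := by
        rw [hcdef, ← hDcalc p q, hg]
        exact hgc
      have hCc : (C c⁻¹ : RR) * C c = 1 := by
        rw [← map_mul, inv_mul_cancel₀ hc, map_one]
      set q₁ : RR := q - C c with hq₁def
      have hq₁m : q₁ ∈ mI := by
        rw [mem_m_iff, hq₁def, map_sub, constantCoeff_C, hcdef, sub_self]
      set p₀ : ℂ := constantCoeff p with hp₀def
      set p₁ : RR := p - C p₀ with hp₁def
      have hp₁m : p₁ ∈ mI := by
        rw [mem_m_iff, hp₁def, map_sub, constantCoeff_C, hp₀def, sub_self]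
      -- uv ∈ I
      have huv : uu * vv ∈ I := by
        have key : C c * (uu * vv) = uu * g - p * (uu * uu * uu) - q₁ * uu * vv := by
          rw [← hg, hq₁def]; ring
        have hmem : C c * (uu * vv) ∈ I := by
          rw [key]
          refine Ideal.sub_mem _ (Ideal.sub_mem _ (Ideal.mul_mem_left _ _ hgI)
            (Ideal.mul_mem_left _ _ (hcube (hm3 hu_m hu_m hu_m)))) (hcube (hm3 hq₁m hu_m hv_m))
        have : uu * vv = C c⁻¹ * (C c * (uu * vv)) := by
          rw [← mul_assoc, hCc, one_mul]
        rw [this]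
        exact Ideal.mul_mem_left _ _ hmem
      -- v² ∈ I
      have hv2 : vv * vv ∈ I := by
        have key : C c * (vv * vv) = vv * g - p * (uu * uu * vv) - q₁ * vv * vv := by
          rw [← hg, hq₁def]; ring
        have hmem : C c * (vv * vv) ∈ I := by
          rw [key]
          refine Ideal.sub_mem _ (Ideal.sub_mem _ (Ideal.mul_mem_left _ _ hgI)
            (Ideal.mul_mem_left _ _ (hcube (hm3 hu_m hu_m hv_m)))) (hcube (hm3 hq₁m hv_m hv_m))
        have : vv * vv = C c⁻¹ * (C c * (vv * vv)) := by
          rw [← mul_assoc, hCc, one_mul]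
        rw [this]
        exact Ideal.mul_mem_left _ _ hmem
      -- v - A u² ∈ I
      set A : ℂ := -(c⁻¹ * p₀) with hA
      have hq₁v : q₁ * vv ∈ I := by
        obtain ⟨α, β, hq1⟩ := Ideal.mem_span_pair.mp hq₁m
        have : q₁ * vv = α * (uu * vv) + β * (vv * vv) := by rw [← hq1]; ring
        rw [this]
        exact Ideal.add_mem _ (Ideal.mul_mem_left _ _ huv) (Ideal.mul_mem_left _ _ hv2)
      have hcore : C p₀ * uu ^ 2 + C c * vv ∈ I := by
        have key : C p₀ * uu ^ 2 + C c * vv = g - p₁ * uu * uu - q₁ * vv := by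
          rw [← hg, hp₁def, hq₁def]; ring
        rw [key]
        exact Ideal.sub_mem _ (Ideal.sub_mem _ hgI (hcube (hm3 hp₁m hu_m hu_m))) hq₁v
      have hvA : vv - C A * uu ^ 2 ∈ I := by
        have hrepr : vv - C A * uu ^ 2 = C c⁻¹ * (C p₀ * uu ^ 2 + C c * vv) := by
          have hCA : (C A : RR) = -(C c⁻¹ * C p₀) := by
            rw [hA, map_neg, map_mul]
          rw [hCA]
          linear_combination (-vv : RR) * hCc
        rw [hrepr]
        exact Ideal.mul_mem_left _ _ hcore
      have hKI : KA A ≤ I := by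
        rw [Ideal.span_le]
        rintro x (rfl | rfl)
        · exact hvA
        · have : (uu ^ 3 : RR) = uu * uu * uu := by ring
          rw [this]
          exact hcube (hm3 hu_m hu_m hu_m)
      haveI := KA_finite A
      have hIK : I ≤ KA A := le_of_quot_finrank hKI (by rw [KA_finrank A, hdim])
      exact ⟨A, le_antisymm hIK hKI⟩
  · rintro (rfl | ⟨A, rfl⟩)
    · exact ⟨msq_le_J, msq_finrank, msq_radical⟩
    · exact ⟨KA_le_J A, KA_finrank A, KA_radical A⟩

end FibreAux

/-- For an ideal `I` of `ℂ[u,v]` (with `u = X 0`, `v = X 1`), the following are equivalent: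
(i) `I ⊆ (u², v)`, `dim_ℂ ℂ[u,v]/I = 3` and `√I = (u, v)`;
(ii) `I = (u², uv, v²)` or `I = (v − A·u², u³)` for some `A ∈ ℂ`. -/
theorem fibre_classification (I : Ideal (MvPolynomial (Fin 2) ℂ)) :
    (I ≤ Ideal.span {(X 0 : MvPolynomial (Fin 2) ℂ) ^ 2, X 1} ∧
        Module.finrank ℂ (MvPolynomial (Fin 2) ℂ ⧸ I) = 3 ∧
        I.radical = Ideal.span {(X 0 : MvPolynomial (Fin 2) ℂ), X 1})
      ↔ (I = Ideal.span {(X 0 : MvPolynomial (Fin 2) ℂ) ^ 2, X 0 * X 1, X 1 ^ 2} ∨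
          ∃ A : ℂ, I = Ideal.span {(X 1 : MvPolynomial (Fin 2) ℂ) - C A * X 0 ^ 2, X 0 ^ 3}) :=
  FibreAux.fibre_classification I
end

section
/- Let m₂, m₃, m₅ ∈ ℂ satisfy m₂² + m₃·m₅ = 0. Then the quotient ring ℂ[u,v] / (u² − m₃·v, u·v + m₂·v, v² + m₅·v) has dimension 3 as a complex vector space. -/
/-!
In the quotient `u² = m₃ v`, `uv = -m₂ v` and `v² = -m₅ v`, so `1, u, v` span it. They are
independent because the quotient acts on `K³` through the matrices of multiplication by `u` and `v`
in the would-be basis `1, u, v`: these matrices commute exactly when `m₂² + m₃ m₅ = 0`, they satisfy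
the defining relations, and applied to `e₀` the elements `1, u, v` give `e₀, e₁, e₂`.
-/

open MvPolynomial Submodule

theorem MvPolynomial.span_eq_top_of_mul_X_mem {σ R A : Type*} [CommSemiring R] [Semiring A]
    [Algebra R A] (f : MvPolynomial σ R →ₐ[R] A) (hf : Function.Surjective f) {S : Set A}
    (h1 : 1 ∈ span R S) (hX : ∀ s ∈ S, ∀ i, s * f (X i) ∈ span R S) : span R S = ⊤ := by
  have hmul (i : σ) : span R S ≤ (span R S).comap (LinearMap.mulRight R (f (X i))) :=
    span_le.mpr fun s hs => hX s hs i
  refine eq_top_iff'.mpr fun a => ?_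
  obtain ⟨p, rfl⟩ := hf a
  induction p using MvPolynomial.induction_on with
  | C r => simpa [Algebra.algebraMap_eq_smul_one] using smul_mem _ r h1
  | add p q hp hq => simpa using add_mem hp hq
  | mul_X p i hp => simpa using hmul i hp

variable {K : Type*} [CommRing K]

noncomputable def relIdeal (m₂ m₃ m₅ : K) : Ideal (MvPolynomial (Fin 2) K) :=
  Ideal.span {X 0 ^ 2 - C m₃ * X 1, X 0 * X 1 + C m₂ * X 1, X 1 ^ 2 + C m₅ * X 1}

/-- Multiplication by `u` in the basis `1, u, v` of `K[u, v] ⧸ relIdeal m₂ m₃ m₅`. -/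
def mulUMatrix (m₂ m₃ : K) : Matrix (Fin 3) (Fin 3) K := !![0, 0, 0; 1, 0, 0; 0, m₃, -m₂]

/-- Multiplication by `v` in the basis `1, u, v` of `K[u, v] ⧸ relIdeal m₂ m₃ m₅`. -/
def mulVMatrix (m₂ m₅ : K) : Matrix (Fin 3) (Fin 3) K := !![0, 0, 0; 0, 0, 0; 1, -m₂, -m₅]

section

variable {m₂ m₃ m₅ : K}

local notation "π" => Ideal.Quotient.mk (relIdeal m₂ m₃ m₅)

variable (m₂ m₃ m₅) in
theorem mk_relIdeal_X_mul_X :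
    π (X 0) * π (X 0) = m₃ • π (X 1) ∧ π (X 0) * π (X 1) = -m₂ • π (X 1) ∧
      π (X 1) * π (X 1) = -m₅ • π (X 1) := by
  have hmem : ∀ g ∈ ({X 0 ^ 2 - C m₃ * X 1, X 0 * X 1 + C m₂ * X 1, X 1 ^ 2 + C m₅ * X 1} :
      Set (MvPolynomial (Fin 2) K)), Ideal.Quotient.mkₐ K (relIdeal m₂ m₃ m₅) g = 0 :=
    fun g hg => Ideal.Quotient.eq_zero_iff_mem.mpr (Ideal.subset_span hg)
  simp only [Set.mem_insert_iff, Set.mem_singleton_iff, forall_eq_or_imp, forall_eq, C_mul',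
    map_sub, map_add, map_mul, map_pow, Ideal.Quotient.mkₐ_eq_mk] at hmem
  obtain ⟨h1, h2, h3⟩ := hmem
  refine ⟨?_, ?_, ?_⟩
  · rw [← sq]; exact sub_eq_zero.mp h1
  · rw [neg_smul]; exact eq_neg_of_add_eq_zero_left h2
  · rw [← sq, neg_smul]; exact eq_neg_of_add_eq_zero_left h3

theorem span_mk_relIdeal_eq_top :
    span K (Set.range ![1, π (X 0), π (X 1)]) = ⊤ := by
  obtain ⟨huu, huv, hvv⟩ := mk_relIdeal_X_mul_X m₂ m₃ m₅
  have hu : π (X 0) ∈ span K (Set.range ![1, π (X 0), π (X 1)]) := subset_span ⟨1, rfl⟩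
  have hv : π (X 1) ∈ span K (Set.range ![1, π (X 0), π (X 1)]) := subset_span ⟨2, rfl⟩
  refine span_eq_top_of_mul_X_mem _ (Ideal.Quotient.mkₐ_surjective K _) (subset_span ⟨0, rfl⟩) ?_
  simp only [Set.forall_mem_range, Fin.forall_fin_succ, IsEmpty.forall_iff,
    Ideal.Quotient.mkₐ_eq_mk, Matrix.cons_val_zero, Matrix.cons_val_succ, Fin.succ_zero_eq_one,
    and_true, one_mul, huu, huv, hvv, mul_comm (π (X 1))]
  exact ⟨⟨hu, hv⟩, ⟨smul_mem _ _ hv, smul_mem _ _ hv⟩, smul_mem _ _ hv, smul_mem _ _ hv⟩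

theorem commute_mulUMatrix_mulVMatrix (h : m₂ ^ 2 + m₃ * m₅ = 0) :
    Commute (mulUMatrix m₂ m₃) (mulVMatrix m₂ m₅) := by
  ext i j
  fin_cases i <;> fin_cases j <;>
    simp [mulUMatrix, mulVMatrix, Matrix.mul_apply, Fin.sum_univ_three] <;> grind

theorem mulUMatrix_mul_self (h : m₂ ^ 2 + m₃ * m₅ = 0) :
    mulUMatrix m₂ m₃ * mulUMatrix m₂ m₃ = m₃ • mulVMatrix m₂ m₅ := by
  ext i j
  fin_cases i <;> fin_cases j <;>
    simp [mulUMatrix, mulVMatrix, Matrix.mul_apply, Fin.sum_univ_three] <;> grind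

theorem mulUMatrix_mul_mulVMatrix :
    mulUMatrix m₂ m₃ * mulVMatrix m₂ m₅ = -m₂ • mulVMatrix m₂ m₅ := by
  ext i j
  fin_cases i <;> fin_cases j <;> simp [mulUMatrix, mulVMatrix, Matrix.mul_apply, Fin.sum_univ_three]

theorem mulVMatrix_mul_self :
    mulVMatrix m₂ m₅ * mulVMatrix m₂ m₅ = -m₅ • mulVMatrix m₂ m₅ := by
  ext i j
  fin_cases i <;> fin_cases j <;> simp [mulVMatrix, Matrix.mul_apply, Fin.sum_univ_three]

open scoped IsMulCommutative in
theorem linearIndependent_mk_relIdeal (h : m₂ ^ 2 + m₃ * m₅ = 0) :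
    LinearIndependent K ![1, π (X 0), π (X 1)] := by
  let B := Algebra.adjoin K {mulUMatrix m₂ m₃, mulVMatrix m₂ m₅}
  have : IsMulCommutative B := Algebra.isMulCommutative_adjoin K <| by
    have hUV := commute_mulUMatrix_mulVMatrix h
    simp only [Set.mem_insert_iff, Set.mem_singleton_iff]
    rintro a (rfl | rfl) b (rfl | rfl) <;> first | rfl | exact hUV.eq | exact hUV.eq.symm
  let U : B := ⟨mulUMatrix m₂ m₃, Algebra.subset_adjoin (by simp)⟩
  let V : B := ⟨mulVMatrix m₂ m₅, Algebra.subset_adjoin (by simp)⟩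
  let φ : MvPolynomial (Fin 2) K →ₐ[K] B := aeval ![U, V]
  have hφ : relIdeal m₂ m₃ m₅ ≤ RingHom.ker φ := by
    refine Ideal.span_le.mpr ?_
    simp only [Set.insert_subset_iff, Set.singleton_subset_iff, SetLike.mem_coe, RingHom.mem_ker]
    refine ⟨?_, ?_, ?_⟩ <;> apply Subtype.ext <;>
      simp [φ, U, V, C_mul', sq, mulUMatrix_mul_self h, mulUMatrix_mul_mulVMatrix,
        mulVMatrix_mul_self]
  let ψ := Ideal.Quotient.liftₐ (relIdeal m₂ m₃ m₅) φ hφ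
  have hψ (p) : ψ (π p) = φ p := rfl
  let col₀ : Matrix (Fin 3) (Fin 3) K →ₗ[K] (Fin 3 → K) :=
    LinearMap.applyₗ (Pi.single 0 1) ∘ₗ Matrix.toLin'.toLinearMap
  refine LinearIndependent.of_comp (col₀ ∘ₗ B.val.toLinearMap ∘ₗ ψ.toLinearMap) ?_
  convert (Pi.basisFun K (Fin 3)).linearIndependent
  ext j i
  fin_cases j <;> fin_cases i <;> simp [col₀, hψ, φ, U, V, mulUMatrix, mulVMatrix]

end

/-- If `m₂² + m₃m₅ = 0`, then `ℂ[u,v] / (u² − m₃v, uv + m₂v, v² + m₅v)` (with `u = X 0`,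
`v = X 1`) has dimension `3` as a complex vector space. -/
theorem finrank_quotient_three_of_rel (m₂ m₃ m₅ : ℂ) (h : m₂ ^ 2 + m₃ * m₅ = 0) :
    Module.finrank ℂ
      (MvPolynomial (Fin 2) ℂ ⧸
        Ideal.span {(X 0 : MvPolynomial (Fin 2) ℂ) ^ 2 - C m₃ * X 1,
          X 0 * X 1 + C m₂ * X 1, X 1 ^ 2 + C m₅ * X 1}) = 3 :=
  Module.finrank_eq_card_basis
    (Module.Basis.mk (linearIndependent_mk_relIdeal h) span_mk_relIdeal_eq_top.ge)
end

section
/- Let P and Q be 3×2 complex matrices such that for every (x, y) ∈ ℂ² with (x, y) ≠ (0, 0) the matrix x·P + y·Q has rank 2 (i.e. is injective as a linear map ℂ² → ℂ³). Let P₀ be the 3×2 matrix with rows (1,0), (0,1), (0,0) and Q₀ the 3×2 matrix with rows (0,0), (1,0), (0,1). Then there exist invertible matrices g ∈ GL₃(ℂ) and h ∈ GL₂(ℂ) such that g·P·h = P₀ and g·Q·h = Q₀; moreover the pair (g, h) is unique up to replacing it by (c·g, c⁻¹·h) for a nonzero scalar c ∈ ℂ. -/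
open Matrix

namespace PencilNormalFormAux

open Module Polynomial

lemma rank_two_inj (M : Matrix (Fin 3) (Fin 2) ℂ) (hr : M.rank = 2)
    (v : Fin 2 → ℂ) (hv : v ≠ 0) : M.mulVec v ≠ 0 := by
  intro h0
  have hrn := LinearMap.finrank_range_add_finrank_ker M.mulVecLin
  have hker : 0 < finrank ℂ (LinearMap.ker M.mulVecLin) := by
    have hmem : v ∈ LinearMap.ker M.mulVecLin := by
      simpa [Matrix.mulVecLin_apply] using h0
    have : Nontrivial (LinearMap.ker M.mulVecLin) :=
      ⟨⟨v, hmem⟩, 0, by simpa using hv⟩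
    exact finrank_pos
  have hdom : finrank ℂ (Fin 2 → ℂ) = 2 := by simp
  rw [Matrix.rank] at hr
  omega

lemma kernel_extend (R : Matrix (Fin 3) (Fin 2) ℂ) (φ : Fin 3 → ℂ) (k : Fin 3)
    (hφk : φ k ≠ 0) (hφR : φ ᵥ* R = 0) (v : Fin 2 → ℂ)
    (hv : (R.submatrix k.succAbove id).mulVec v = 0) : R.mulVec v = 0 := by
  have hsub : ∀ j : Fin 2, R.mulVec v (k.succAbove j) = 0 := by
    intro j
    have := congrFun hv j
    simpa [Matrix.mulVec, Matrix.submatrix, dotProduct] using this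
  have hdot : φ ⬝ᵥ R.mulVec v = 0 := by
    rw [Matrix.dotProduct_mulVec, hφR]; simp
  have hk : R.mulVec v k = 0 := by
    have hsum : φ ⬝ᵥ R.mulVec v = φ k * R.mulVec v k := by
      rw [dotProduct, Fin.sum_univ_succAbove _ k]
      simp [hsub]
    rw [hsum] at hdot
    exact (mul_eq_zero.mp hdot).resolve_left hφk
  funext i
  rcases eq_or_ne i k with rfl | hik
  · exact hk
  · obtain ⟨j, rfl⟩ := Fin.exists_succAbove_eq hik
    exact hsub j

lemma pencil_contra (P Q : Matrix (Fin 3) (Fin 2) ℂ)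
    (inj : ∀ x y : ℂ, (x, y) ≠ (0, 0) → ∀ v : Fin 2 → ℂ, v ≠ 0 →
      (x • P + y • Q).mulVec v ≠ 0)
    (φ : Fin 3 → ℂ) (hφ : φ ≠ 0) (hP : φ ᵥ* P = 0) (hQ : φ ᵥ* Q = 0) : False := by
  obtain ⟨k, hφk⟩ := Function.ne_iff.mp hφ
  rw [Pi.zero_apply] at hφk
  set P' := P.submatrix k.succAbove id with hP'
  set Q' := Q.submatrix k.succAbove id with hQ'
  have step : ∀ x y : ℂ, (x, y) ≠ (0, 0) → (x • P' + y • Q').det ≠ 0 := by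
    intro x y hxy hdet
    obtain ⟨v, hv, hv0⟩ := Matrix.exists_mulVec_eq_zero_iff.mpr hdet
    have hsm : x • P' + y • Q' = (x • P + y • Q).submatrix k.succAbove id := by
      ext i j; simp [hP', hQ', Matrix.submatrix]
    have hsmul : ∀ (c : ℂ) (M : Matrix (Fin 3) (Fin 2) ℂ),
        φ ᵥ* (c • M) = c • (φ ᵥ* M) := by
      intro c M
      funext j
      simp [Matrix.vecMul, dotProduct, Finset.mul_sum, mul_left_comm]
    have hφR : φ ᵥ* (x • P + y • Q) = 0 := by
      rw [Matrix.vecMul_add, hsmul, hsmul, hP, hQ]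
      simp
    rw [hsm] at hv0
    exact inj x y hxy v hv (kernel_extend _ φ k hφk hφR v hv0)
  have hdP : P'.det ≠ 0 := by
    have := step 1 0 (by simp)
    simpa using this
  set p : Polynomial ℂ := C P'.det * X ^ 2 +
      C (P' 0 0 * Q' 1 1 + P' 1 1 * Q' 0 0 - P' 0 1 * Q' 1 0 - P' 1 0 * Q' 0 1) * X +
      C Q'.det with hp
  have heval : ∀ x : ℂ, p.eval x = (x • P' + Q').det := by
    intro x
    simp [hp, Matrix.det_fin_two]
    ring
  have hdeg : 0 < p.degree := by
    have hc : p.coeff 2 = P'.det := by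
      simp [hp, coeff_add, coeff_C_mul, coeff_C, coeff_X, coeff_X_pow]
    have : (2 : WithBot ℕ) ≤ p.degree := by
      apply le_degree_of_ne_zero
      rw [hc]; exact hdP
    exact lt_of_lt_of_le (by norm_num) this
  obtain ⟨z, hz⟩ := Complex.exists_root hdeg
  have : (z • P' + (1 : ℂ) • Q').det = 0 := by
    have := heval z
    rw [Polynomial.IsRoot] at hz
    rw [hz] at this
    simpa using this.symm
  exact step z 1 (by simp) this

lemma exists_ker_pair (P Q : Matrix (Fin 3) (Fin 2) ℂ) :
    ∃ u1 u2 : Fin 2 → ℂ, ¬(u1 = 0 ∧ u2 = 0) ∧ Q.mulVec u1 = P.mulVec u2 := by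
  set L : ((Fin 2 → ℂ) × (Fin 2 → ℂ)) →ₗ[ℂ] (Fin 3 → ℂ) :=
    Q.mulVecLin.comp (LinearMap.fst ℂ _ _) - P.mulVecLin.comp (LinearMap.snd ℂ _ _) with hL
  have hrn := LinearMap.finrank_range_add_finrank_ker L
  have hdom : finrank ℂ ((Fin 2 → ℂ) × (Fin 2 → ℂ)) = 4 := by simp
  have hrange : finrank ℂ (LinearMap.range L) ≤ 3 := by
    have := Submodule.finrank_le (LinearMap.range L)
    simpa using this
  have hker : 0 < finrank ℂ (LinearMap.ker L) := by omega
  have : Nontrivial (LinearMap.ker L) := finrank_pos_iff.mp hker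
  obtain ⟨⟨x, hx⟩, hx0⟩ := exists_ne (0 : LinearMap.ker L)
  refine ⟨x.1, x.2, ?_, ?_⟩
  · intro ⟨h1, h2⟩
    apply hx0
    ext <;> simp [h1, h2]
  · have := hx
    rw [LinearMap.mem_ker, hL] at this
    simp [LinearMap.sub_apply] at this
    exact sub_eq_zero.mp this

lemma pencil_uniq (P Q : Matrix (Fin 3) (Fin 2) ℂ)
    (g g' : GL (Fin 3) ℂ) (h h' : GL (Fin 2) ℂ)
    (hgP : (g : Matrix (Fin 3) (Fin 3) ℂ) * P * (h : Matrix (Fin 2) (Fin 2) ℂ) = !![1, 0; 0, 1; 0, 0])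
    (hgQ : (g : Matrix (Fin 3) (Fin 3) ℂ) * Q * (h : Matrix (Fin 2) (Fin 2) ℂ) = !![0, 0; 1, 0; 0, 1])
    (h1 : (g' : Matrix (Fin 3) (Fin 3) ℂ) * P * (h' : Matrix (Fin 2) (Fin 2) ℂ) = !![1, 0; 0, 1; 0, 0])
    (h2 : (g' : Matrix (Fin 3) (Fin 3) ℂ) * Q * (h' : Matrix (Fin 2) (Fin 2) ℂ) = !![0, 0; 1, 0; 0, 1]) :
    ∃ c : ℂˣ, (g' : Matrix (Fin 3) (Fin 3) ℂ) = (c : ℂ) • (g : Matrix (Fin 3) (Fin 3) ℂ) ∧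
      (h' : Matrix (Fin 2) (Fin 2) ℂ) = ((c⁻¹ : ℂˣ) : ℂ) • (h : Matrix (Fin 2) (Fin 2) ℂ) := by
  set A : Matrix (Fin 3) (Fin 3) ℂ := (g' : Matrix (Fin 3) (Fin 3) ℂ) * ((g⁻¹ : GL (Fin 3) ℂ) : Matrix (Fin 3) (Fin 3) ℂ) with hA
  set B : Matrix (Fin 2) (Fin 2) ℂ := ((h⁻¹ : GL (Fin 2) ℂ) : Matrix (Fin 2) (Fin 2) ℂ) * (h' : Matrix (Fin 2) (Fin 2) ℂ) with hB
  have hg1 : ((g⁻¹ : GL (Fin 3) ℂ) : Matrix (Fin 3) (Fin 3) ℂ) * g = 1 := g.inv_mul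
  have hh1 : (h : Matrix (Fin 2) (Fin 2) ℂ) * ((h⁻¹ : GL (Fin 2) ℂ) : Matrix (Fin 2) (Fin 2) ℂ) = 1 := h.mul_inv
  have key : ∀ M : Matrix (Fin 3) (Fin 2) ℂ,
      A * ((g : Matrix (Fin 3) (Fin 3) ℂ) * M * (h : Matrix (Fin 2) (Fin 2) ℂ)) * B =
        (g' : Matrix (Fin 3) (Fin 3) ℂ) * M * (h' : Matrix (Fin 2) (Fin 2) ℂ) := by
    intro M
    calc A * ((g : Matrix (Fin 3) (Fin 3) ℂ) * M * (h : Matrix (Fin 2) (Fin 2) ℂ)) * B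
        = (g' : Matrix (Fin 3) (Fin 3) ℂ) *
            ((((g⁻¹ : GL (Fin 3) ℂ) : Matrix (Fin 3) (Fin 3) ℂ) * (g : Matrix (Fin 3) (Fin 3) ℂ)) * M *
              ((h : Matrix (Fin 2) (Fin 2) ℂ) * ((h⁻¹ : GL (Fin 2) ℂ) : Matrix (Fin 2) (Fin 2) ℂ))) *
                (h' : Matrix (Fin 2) (Fin 2) ℂ) := by
          simp only [hA, hB, Matrix.mul_assoc]
      _ = (g' : Matrix (Fin 3) (Fin 3) ℂ) * M * (h' : Matrix (Fin 2) (Fin 2) ℂ) := by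
          rw [hg1, hh1, Matrix.one_mul, Matrix.mul_one]
  have eA : A * !![(1:ℂ), 0; 0, 1; 0, 0] * B = !![(1:ℂ), 0; 0, 1; 0, 0] := by
    conv_lhs => rw [← hgP]
    rw [key, h1]
  have eB : A * !![(0:ℂ), 0; 1, 0; 0, 1] * B = !![(0:ℂ), 0; 1, 0; 0, 1] := by
    conv_lhs => rw [← hgQ]
    rw [key, h2]
  -- entry equations
  have EA : ∀ i j, (A * !![(1:ℂ), 0; 0, 1; 0, 0] * B) i j = !![(1:ℂ), 0; 0, 1; 0, 0] i j :=
    fun i j => congrFun (congrFun eA i) j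
  have EB : ∀ i j, (A * !![(0:ℂ), 0; 1, 0; 0, 1] * B) i j = !![(0:ℂ), 0; 1, 0; 0, 1] i j :=
    fun i j => congrFun (congrFun eB i) j
  have eA00 := EA 0 0; have eA01 := EA 0 1
  have eA10 := EA 1 0; have eA11 := EA 1 1
  have eA20 := EA 2 0; have eA21 := EA 2 1
  have eB00 := EB 0 0; have eB01 := EB 0 1
  have eB10 := EB 1 0; have eB11 := EB 1 1
  have eB20 := EB 2 0; have eB21 := EB 2 1
  simp [Matrix.mul_apply, Fin.sum_univ_succ] at eA00 eA01 eA10 eA11 eA20 eA21 eB00 eB01 eB10 eB11 eB20 eB21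
  have hdB : B 0 0 * B 1 1 - B 0 1 * B 1 0 ≠ 0 := by
    have hu : IsUnit B.det := by
      rw [hB]
      have : IsUnit (((h⁻¹ * h' : GL (Fin 2) ℂ) : Matrix (Fin 2) (Fin 2) ℂ)) := (h⁻¹ * h').isUnit
      rw [Units.val_mul] at this
      exact (Matrix.isUnit_iff_isUnit_det _).mp this
    rw [Matrix.det_fin_two] at hu
    exact isUnit_iff_ne_zero.mp hu
  have eA20' : A 2 0 * B 0 0 + A 2 1 * B 1 0 = 0 := by
    rw [eA20]
  clear eA20
  have eA20 := eA20'
  -- solve the linear system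
  have hA20 : A 2 0 = 0 := by
    have h0 : A 2 0 * (B 0 0 * B 1 1 - B 0 1 * B 1 0) = 0 := by
      linear_combination B 1 1 * eA20 - B 1 0 * eA21
    exact (mul_eq_zero.mp h0).resolve_right hdB
  have hA21 : A 2 1 = 0 := by
    have h0 : A 2 1 * (B 0 0 * B 1 1 - B 0 1 * B 1 0) = 0 := by
      linear_combination B 0 0 * eA21 - B 0 1 * eA20
    exact (mul_eq_zero.mp h0).resolve_right hdB
  have hA01 : A 0 1 = 0 := by
    have h0 : A 0 1 * (B 0 0 * B 1 1 - B 0 1 * B 1 0) = 0 := by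
      linear_combination B 1 1 * eB00 - B 1 0 * eB01
    exact (mul_eq_zero.mp h0).resolve_right hdB
  have hA02 : A 0 2 = 0 := by
    have h0 : A 0 2 * (B 0 0 * B 1 1 - B 0 1 * B 1 0) = 0 := by
      linear_combination B 0 0 * eB01 - B 0 1 * eB00
    exact (mul_eq_zero.mp h0).resolve_right hdB
  have hA00a : A 0 0 * B 0 0 = 1 := by linear_combination eA00 - B 1 0 * hA01
  have ha : B 0 0 ≠ 0 := right_ne_zero_of_mul_eq_one hA00a
  have hA00 : A 0 0 ≠ 0 := left_ne_zero_of_mul_eq_one hA00a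
  have hb : B 0 1 = 0 := by
    have h0 : A 0 0 * B 0 1 = 0 := by linear_combination eA01 - B 1 1 * hA01
    exact (mul_eq_zero.mp h0).resolve_left hA00
  have hA22d : A 2 2 * B 1 1 = 1 := by linear_combination eB21 - B 0 1 * hA21
  have hA22 : A 2 2 ≠ 0 := left_ne_zero_of_mul_eq_one hA22d
  have hd : B 1 1 ≠ 0 := right_ne_zero_of_mul_eq_one hA22d
  have hc : B 1 0 = 0 := by
    have h0 : A 2 2 * B 1 0 = 0 := by linear_combination eB20 - B 0 0 * hA21
    exact (mul_eq_zero.mp h0).resolve_left hA22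
  have hA10 : A 1 0 = 0 := by
    have h0 : A 1 0 * B 0 0 = 0 := by linear_combination eA10 - A 1 1 * hc
    exact (mul_eq_zero.mp h0).resolve_right ha
  have hA11d : A 1 1 * B 1 1 = 1 := by linear_combination eA11 - B 0 1 * hA10
  have hA11 : A 1 1 ≠ 0 := left_ne_zero_of_mul_eq_one hA11d
  have hA11a : A 1 1 * B 0 0 = 1 := by linear_combination eB10 - A 1 2 * hc
  have hA12 : A 1 2 = 0 := by
    have h0 : A 1 2 * B 1 1 = 0 := by linear_combination eB11 - A 1 1 * hb
    exact (mul_eq_zero.mp h0).resolve_right hd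
  have had : B 1 1 = B 0 0 := by
    have h0 : A 1 1 * (B 1 1 - B 0 0) = 0 := by linear_combination hA11d - hA11a
    exact sub_eq_zero.mp ((mul_eq_zero.mp h0).resolve_left hA11)
  -- conclude
  have hBform : B = B 0 0 • (1 : Matrix (Fin 2) (Fin 2) ℂ) := by
    ext i j
    fin_cases i <;> fin_cases j <;>
      simp [hb, hc, had, Matrix.one_apply]
  have hAform : A = (B 0 0)⁻¹ • (1 : Matrix (Fin 3) (Fin 3) ℂ) := by
    ext i j
    fin_cases i <;> fin_cases j <;>
      simp [hA01, hA02, hA10, hA12, hA20, hA21, Matrix.one_apply] <;>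
      field_simp
    · linear_combination hA00a
    · linear_combination hA11a
    · linear_combination hA22d - A 2 2 * had
  refine ⟨(Units.mk0 (B 0 0) ha)⁻¹, ?_, ?_⟩
  · have hg' : (g' : Matrix (Fin 3) (Fin 3) ℂ) = A * g := by
      rw [hA, Matrix.mul_assoc, hg1, Matrix.mul_one]
    rw [hg']
    conv_lhs => rw [hAform]
    rw [Matrix.smul_mul, Matrix.one_mul]
    simp
  · have hh' : (h' : Matrix (Fin 2) (Fin 2) ℂ) = (h : Matrix (Fin 2) (Fin 2) ℂ) * B := by
      rw [hB, ← Matrix.mul_assoc, hh1, Matrix.one_mul]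
    rw [hh']
    conv_lhs => rw [hBform]
    rw [Matrix.mul_smul, Matrix.mul_one]
    simp


end PencilNormalFormAux

/-- Normal form for a 3×2 pencil of matrices of everywhere maximal rank: if `x·P + y·Q` has
rank 2 for all `(x, y) ≠ (0, 0)`, then there are `g ∈ GL₃(ℂ)`, `h ∈ GL₂(ℂ)` with
`g·P·h = P₀` and `g·Q·h = Q₀` where `P₀, Q₀` are the standard pencil, and the pair `(g, h)` is
unique up to replacing it by `(c·g, c⁻¹·h)` for a nonzero scalar `c`. -/
theorem pencil_normal_form (P Q : Matrix (Fin 3) (Fin 2) ℂ)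
    (hrank : ∀ x y : ℂ, (x, y) ≠ (0, 0) → (x • P + y • Q).rank = 2) :
    ∃ (g : GL (Fin 3) ℂ) (h : GL (Fin 2) ℂ),
      (g : Matrix (Fin 3) (Fin 3) ℂ) * P * (h : Matrix (Fin 2) (Fin 2) ℂ) =
          !![1, 0; 0, 1; 0, 0] ∧
      (g : Matrix (Fin 3) (Fin 3) ℂ) * Q * (h : Matrix (Fin 2) (Fin 2) ℂ) =
          !![0, 0; 1, 0; 0, 1] ∧
      ∀ (g' : GL (Fin 3) ℂ) (h' : GL (Fin 2) ℂ),
        (g' : Matrix (Fin 3) (Fin 3) ℂ) * P * (h' : Matrix (Fin 2) (Fin 2) ℂ) =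
            !![1, 0; 0, 1; 0, 0] →
        (g' : Matrix (Fin 3) (Fin 3) ℂ) * Q * (h' : Matrix (Fin 2) (Fin 2) ℂ) =
            !![0, 0; 1, 0; 0, 1] →
        ∃ c : ℂˣ, (g' : Matrix (Fin 3) (Fin 3) ℂ) = (c : ℂ) • (g : Matrix (Fin 3) (Fin 3) ℂ) ∧
          (h' : Matrix (Fin 2) (Fin 2) ℂ) = ((c⁻¹ : ℂˣ) : ℂ) • (h : Matrix (Fin 2) (Fin 2) ℂ) := by
  have inj : ∀ x y : ℂ, (x, y) ≠ (0, 0) → ∀ v : Fin 2 → ℂ, v ≠ 0 →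
      (x • P + y • Q).mulVec v ≠ 0 :=
    fun x y hxy v hv => PencilNormalFormAux.rank_two_inj _ (hrank x y hxy) v hv
  have injP : ∀ v : Fin 2 → ℂ, v ≠ 0 → P.mulVec v ≠ 0 := by
    intro v hv hPv
    exact inj 1 0 (by simp) v hv (by simpa using hPv)
  obtain ⟨u1, u2, hpair, hu⟩ := PencilNormalFormAux.exists_ker_pair P Q
  have hu1 : u1 ≠ 0 := by
    intro h
    have hu2 : u2 ≠ 0 := fun h2 => hpair ⟨h, h2⟩
    apply injP u2 hu2
    rw [← hu, h, Matrix.mulVec_zero]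
  set Hinv : Matrix (Fin 2) (Fin 2) ℂ := Matrix.of fun i j => ![u1, u2] j i with hHinv
  have hdH : Hinv.det ≠ 0 := by
    rw [Matrix.det_fin_two]
    intro hdet
    simp only [hHinv, Matrix.of_apply, Matrix.cons_val', Matrix.cons_val_zero,
      Matrix.cons_val_one, Matrix.head_cons, Matrix.empty_val', Matrix.cons_val_fin_one,
      Matrix.vecHead] at hdet
    have h0 : u1 0 ≠ 0 ∨ u1 1 ≠ 0 := by
      by_contra hcon
      push_neg at hcon
      exact hu1 (funext fun i => by fin_cases i <;> simp [hcon.1, hcon.2])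
    have hlam : ∃ lam : ℂ, u2 = lam • u1 := by
      rcases h0 with h0 | h0
      · refine ⟨u2 0 / u1 0, funext fun j => ?_⟩
        fin_cases j
        · simp [Matrix.vecHead]; field_simp
        · simp [Matrix.vecHead]
          field_simp
          linear_combination hdet
      · refine ⟨u2 1 / u1 1, funext fun j => ?_⟩
        fin_cases j
        · simp [Matrix.vecHead]
          field_simp
          linear_combination -hdet
        · simp [Matrix.vecHead]; field_simp
    obtain ⟨lam, hlam⟩ := hlam
    apply inj lam (-1) (by simp) u1 hu1
    rw [Matrix.add_mulVec, Matrix.smul_mulVec, Matrix.smul_mulVec, hu, hlam,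
      Matrix.mulVec_smul]
    simp
  set Ginv : Matrix (Fin 3) (Fin 3) ℂ :=
    Matrix.of fun i j => ![P.mulVec u1, P.mulVec u2, Q.mulVec u2] j i with hGinv
  have hdG : Ginv.det ≠ 0 := by
    intro hdet
    have hdetT : Ginvᵀ.det = 0 := by rw [Matrix.det_transpose]; exact hdet
    obtain ⟨φ, hφ, hφ0⟩ := Matrix.exists_mulVec_eq_zero_iff.mpr hdetT
    have hf : ∀ j : Fin 3, φ ⬝ᵥ (![P.mulVec u1, P.mulVec u2, Q.mulVec u2] j) = 0 := by
      intro j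
      have h1 := congrFun hφ0 j
      simp [Matrix.mulVec, dotProduct, hGinv, Matrix.transpose_apply,
        Fin.sum_univ_three, mul_comm] at h1 ⊢
      linear_combination h1
    have hf0 : φ ⬝ᵥ P.mulVec u1 = 0 := by simpa using hf 0
    have hf1 : φ ⬝ᵥ P.mulVec u2 = 0 := by simpa using hf 1
    have hf2 : φ ⬝ᵥ Q.mulVec u2 = 0 := by simpa using hf 2
    have hf3 : φ ⬝ᵥ Q.mulVec u1 = 0 := by rw [hu]; exact hf1
    have hr : ∀ M : Matrix (Fin 3) (Fin 2) ℂ, φ ⬝ᵥ M.mulVec u1 = 0 →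
        φ ⬝ᵥ M.mulVec u2 = 0 → φ ᵥ* M = 0 := by
      intro M h1 h2
      have e1 : (φ ᵥ* M) ⬝ᵥ u1 = 0 := by rw [← Matrix.dotProduct_mulVec]; exact h1
      have e2 : (φ ᵥ* M) ⬝ᵥ u2 = 0 := by rw [← Matrix.dotProduct_mulVec]; exact h2
      have hvm : (φ ᵥ* M) ᵥ* Hinv = 0 := by
        funext j
        fin_cases j
        · simp [Matrix.vecMul, dotProduct, hHinv, Fin.sum_univ_two,
            Matrix.vecHead, Matrix.vecTail] at e1 ⊢
          linear_combination e1
        · simp [Matrix.vecMul, dotProduct, hHinv, Fin.sum_univ_two,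
            Matrix.vecHead, Matrix.vecTail] at e2 ⊢
          linear_combination e2
      have hc := congrArg (fun w => w ᵥ* Hinv⁻¹) hvm
      simpa [Matrix.vecMul_vecMul, Matrix.mul_assoc,
        Matrix.mul_nonsing_inv _ (isUnit_iff_ne_zero.mpr hdH),
        Matrix.mul_one, Matrix.vecMul_one, Matrix.zero_vecMul] using hc
    exact PencilNormalFormAux.pencil_contra P Q inj φ hφ (hr P hf0 hf1) (hr Q hf3 hf2)
  have hPH : P * Hinv = Ginv * !![(1:ℂ), 0; 0, 1; 0, 0] := by
    ext i j
    fin_cases j <;>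
      simp [Matrix.mul_apply, Fin.sum_univ_succ, hHinv, hGinv, Matrix.mulVec,
        dotProduct, Fin.sum_univ_two, Matrix.vecHead, Matrix.vecTail]
  have hQH : Q * Hinv = Ginv * !![(0:ℂ), 0; 1, 0; 0, 1] := by
    ext i j
    have hui := congrFun hu i
    simp [Matrix.mulVec, dotProduct, Fin.sum_univ_two] at hui
    fin_cases j
    · simp [Matrix.mul_apply, Fin.sum_univ_succ, hHinv, hGinv, Matrix.mulVec,
        dotProduct, Fin.sum_univ_two, Matrix.vecHead, Matrix.vecTail]
      linear_combination hui
    · simp [Matrix.mul_apply, Fin.sum_univ_succ, hHinv, hGinv, Matrix.mulVec,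
        dotProduct, Fin.sum_univ_two, Matrix.vecHead, Matrix.vecTail]
  have hHu : IsUnit Hinv := (Matrix.isUnit_iff_isUnit_det _).mpr (isUnit_iff_ne_zero.mpr hdH)
  have hGu : IsUnit Ginv := (Matrix.isUnit_iff_isUnit_det _).mpr (isUnit_iff_ne_zero.mpr hdG)
  have hgcoe : ((hGu.unit⁻¹ : GL (Fin 3) ℂ) : Matrix (Fin 3) (Fin 3) ℂ) = Ginv⁻¹ := by
    rw [Matrix.coe_units_inv, hGu.unit_spec]
  have hhcoe : ((hGu.unit⁻¹ : GL (Fin 3) ℂ) : Matrix (Fin 3) (Fin 3) ℂ) = Ginv⁻¹ := hgcoe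
  have hgP : ((hGu.unit⁻¹ : GL (Fin 3) ℂ) : Matrix (Fin 3) (Fin 3) ℂ) * P *
      ((hHu.unit : GL (Fin 2) ℂ) : Matrix (Fin 2) (Fin 2) ℂ) = !![1, 0; 0, 1; 0, 0] := by
    rw [hgcoe, hHu.unit_spec, Matrix.mul_assoc, hPH, ← Matrix.mul_assoc,
      Matrix.nonsing_inv_mul _ (isUnit_iff_ne_zero.mpr hdG), Matrix.one_mul]
  have hgQ : ((hGu.unit⁻¹ : GL (Fin 3) ℂ) : Matrix (Fin 3) (Fin 3) ℂ) * Q *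
      ((hHu.unit : GL (Fin 2) ℂ) : Matrix (Fin 2) (Fin 2) ℂ) = !![0, 0; 1, 0; 0, 1] := by
    rw [hgcoe, hHu.unit_spec, Matrix.mul_assoc, hQH, ← Matrix.mul_assoc,
      Matrix.nonsing_inv_mul _ (isUnit_iff_ne_zero.mpr hdG), Matrix.one_mul]
  exact ⟨hGu.unit⁻¹, hHu.unit, hgP, hgQ, fun g' h' h1 h2 =>
    PencilNormalFormAux.pencil_uniq P Q _ g' _ h' hgP hgQ h1 h2⟩
end
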